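/- arXiv:0902.1158 — 10 statements merged into one kernel-verified Lean document; each statement's English description precedes it below -/
import Mathlib

section
/- Fix μ > 0. Define v_R(ψ,t) = -μ·coth(2μt) + μ·tanh(2μt)·sin²ψ for ψ ∈ (-π/2, π/2) and t < 0. Then v_R(ψ,t) > 0 for all such (ψ,t), and v_R satisfies the radial pressure equation ∂_t v = v·(∂_ψψ v - tan(ψ)·∂_ψ v) - (∂_ψ v)² + 2v² at every point of (-π/2, π/2) × (-∞, 0). -/
/-!
With `τ = tanh (2μt) ∈ (-1, 0)` the Rosenau solution reads `v = μ (τ sin²ψ - τ⁻¹)`, which is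
positive because `τ² sin²ψ < 1`. Its time derivative comes from `τ' = 2μ (1 - τ²)`, and its
sphere Laplacian from that of `sin²ψ`, namely `2 - 6 sin²ψ`; both sides of the equation then
reduce to `2μ² (1 - τ²) (sin²ψ + τ⁻²)`.
-/

open Real Set

noncomputable def rosenau (μ ψ t : ℝ) : ℝ :=
  -μ * (Real.cosh (2 * μ * t) / Real.sinh (2 * μ * t))
    + μ * Real.tanh (2 * μ * t) * (Real.sin ψ) ^ 2

namespace Real

theorem tanh_neg_iff {x : ℝ} : tanh x < 0 ↔ x < 0 := by
  rw [tanh_eq_sinh_div_cosh, div_neg_iff, sinh_neg_iff]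
  simp [cosh_pos, (cosh_pos x).not_gt]

theorem hasDerivAt_tanh (x : ℝ) : HasDerivAt tanh (1 - tanh x ^ 2) x := by
  have hc : cosh x ≠ 0 := (cosh_pos x).ne'
  have h := (hasDerivAt_sinh x).div (hasDerivAt_cosh x) hc
  rw [show (sinh / cosh : ℝ → ℝ) = tanh from funext fun y => (tanh_eq_sinh_div_cosh y).symm] at h
  refine h.congr_deriv ?_
  rw [tanh_eq_sinh_div_cosh]
  field_simp

end Real

section SinSqProfile

variable (a b : ℝ)

theorem deriv_const_add_mul_sin_sq :
    deriv (fun ψ => a + b * sin ψ ^ 2) = fun ψ => 2 * b * (sin ψ * cos ψ) := by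
  funext ψ
  have h := ((hasDerivAt_sin ψ).fun_pow 2).const_mul b |>.const_add a
  exact h.deriv.trans (by norm_num; ring)

theorem deriv_deriv_const_add_mul_sin_sq (ψ : ℝ) :
    deriv (deriv (fun ψ => a + b * sin ψ ^ 2)) ψ = 2 * b * (cos ψ ^ 2 - sin ψ ^ 2) := by
  rw [deriv_const_add_mul_sin_sq]
  have h := ((hasDerivAt_sin ψ).fun_mul (hasDerivAt_cos ψ)).const_mul (2 * b)
  exact h.deriv.trans (by ring)

end SinSqProfile

theorem rosenau_eq_tanh (μ ψ t : ℝ) :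
    rosenau μ ψ t = μ * (tanh (2 * μ * t) * sin ψ ^ 2 - (tanh (2 * μ * t))⁻¹) := by
  rw [rosenau, tanh_eq_sinh_div_cosh, inv_div]
  ring

theorem rosenau_pos {μ t : ℝ} (hμ : 0 < μ) (ht : t < 0) (ψ : ℝ) : 0 < rosenau μ ψ t := by
  have hτ : tanh (2 * μ * t) < 0 := tanh_neg_iff.2 (by nlinarith)
  have hτ_sq := tanh_sq_lt_one (2 * μ * t)
  rw [rosenau_eq_tanh]
  generalize tanh (2 * μ * t) = τ at hτ hτ_sq ⊢
  have hv : τ * sin ψ ^ 2 - τ⁻¹ = (τ ^ 2 * sin ψ ^ 2 - 1) / τ := by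
    field_simp
  rw [hv]
  have hnum : τ ^ 2 * sin ψ ^ 2 - 1 < 0 := by
    nlinarith [sin_sq_le_one ψ, sq_nonneg τ]
  exact mul_pos hμ (div_pos_of_neg_of_neg hnum hτ)

theorem deriv_rosenau_space (μ ψ t : ℝ) :
    deriv (fun ψ => rosenau μ ψ t) ψ = 2 * (μ * tanh (2 * μ * t)) * (sin ψ * cos ψ) :=
  congrFun (deriv_const_add_mul_sin_sq _ _) ψ

theorem deriv_deriv_rosenau_space (μ ψ t : ℝ) :
    deriv (deriv (fun ψ => rosenau μ ψ t)) ψ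
      = 2 * (μ * tanh (2 * μ * t)) * (cos ψ ^ 2 - sin ψ ^ 2) :=
  deriv_deriv_const_add_mul_sin_sq _ _ ψ

theorem hasDerivAt_rosenau_time (μ ψ : ℝ) {t : ℝ} (hτ : tanh (2 * μ * t) ≠ 0) :
    HasDerivAt (fun s => rosenau μ ψ s)
      (2 * μ ^ 2 * (1 - tanh (2 * μ * t) ^ 2) * (sin ψ ^ 2 + (tanh (2 * μ * t))⁻¹ ^ 2)) t := by
  have hτ' : HasDerivAt (fun s => tanh (2 * μ * s)) ((1 - tanh (2 * μ * t) ^ 2) * (2 * μ)) t :=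
    (hasDerivAt_tanh _).comp t ((hasDerivAt_id t).const_mul (2 * μ) |>.congr_deriv (mul_one _))
  have h := ((hτ'.mul_const (sin ψ ^ 2)).sub (hτ'.inv hτ)).const_mul μ
  rw [funext (rosenau_eq_tanh μ ψ)]
  exact h.congr_deriv (by field_simp; ring)

/-- The Rosenau solution is positive on `(-π/2, π/2) × (-∞, 0)` and satisfies the
radial pressure equation `v_t = v·(v_ψψ - tan ψ · v_ψ) - v_ψ² + 2v²` there. -/
theorem rosenau_pos_and_solves (μ : ℝ) (hμ : 0 < μ) :
    ∀ ψ ∈ Set.Ioo (-(π / 2)) (π / 2), ∀ t < (0 : ℝ),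
      0 < rosenau μ ψ t ∧
      deriv (fun s => rosenau μ ψ s) t =
        rosenau μ ψ t * (deriv (deriv (fun s => rosenau μ s t)) ψ
            - Real.tan ψ * deriv (fun s => rosenau μ s t) ψ)
          - (deriv (fun s => rosenau μ s t) ψ) ^ 2 + 2 * (rosenau μ ψ t) ^ 2 := by
  intro ψ hψ t ht
  have hτ : tanh (2 * μ * t) ≠ 0 := (tanh_neg_iff.2 (by nlinarith)).ne
  have hcos : cos ψ ≠ 0 := (cos_pos_of_mem_Ioo hψ).ne'
  refine ⟨rosenau_pos hμ ht ψ, ?_⟩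
  rw [(hasDerivAt_rosenau_time μ ψ hτ).deriv, deriv_deriv_rosenau_space, deriv_rosenau_space,
    rosenau_eq_tanh, tan_eq_sin_div_cos]
  field_simp
  linear_combination
    (tanh (2 * μ * t) ^ 2 + tanh (2 * μ * t) ^ 4 * sin ψ ^ 2) * sin_sq_add_cos_sq ψ
end

section
/- Let I ⊆ ℝ be an interval and let v: (-π/2, π/2) × I → ℝ be positive, twice continuously differentiable in ψ and continuously differentiable in t. Define w: ℝ × I → ℝ by w(x,t) = v(arctan(sinh x), t)·cosh²x. Then v satisfies the radial pressure equation ∂_t v = v·(∂_ψψ v - tan(ψ)·∂_ψ v) - (∂_ψ v)² + 2v² at every point of (-π/2, π/2) × I if and only if w satisfies the cylindrical pressure equation ∂_t w = w·∂_xx w - (∂_x w)² at every point of ℝ × I. -/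
/-!
Mercator's projection `ψ = arctan (sinh x)` has `dψ/dx = 1 / cosh x`, `tan ψ = sinh x` and
`sec² ψ = cosh² x`. Differentiating `w = v(ψ(x), t) · cosh² x` twice in `x` and using
`cosh² x - sinh² x = 1` gives the pointwise identity
`w_t - (w w_xx - w_x²) = cosh² x · (v_t - v (v_ψψ - tan ψ v_ψ) + v_ψ² - 2 v²)`.
Since `cosh² x > 0` and `x ↦ arctan (sinh x)` maps `ℝ` onto `(-π/2, π/2)`, one equation holds
everywhere exactly when the other does.
-/

open Real Set

noncomputable def mercatorPullback (f : ℝ → ℝ) (x : ℝ) : ℝ :=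
  f (arctan (sinh x)) * cosh x ^ 2

lemma arctan_sinh_mem_Ioo (x : ℝ) : arctan (sinh x) ∈ Ioo (-(π / 2)) (π / 2) :=
  ⟨neg_pi_div_two_lt_arctan _, arctan_lt_pi_div_two _⟩

lemma arctan_sinh_arsinh_tan {ψ : ℝ} (hψ : ψ ∈ Ioo (-(π / 2)) (π / 2)) :
    arctan (sinh (arsinh (tan ψ))) = ψ := by
  rw [sinh_arsinh, arctan_tan hψ.1 hψ.2]

lemma hasDerivAt_arctan_sinh (x : ℝ) :
    HasDerivAt (fun y => arctan (sinh y)) (cosh x)⁻¹ x := by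
  refine ((hasDerivAt_arctan _).comp x (hasDerivAt_sinh x)).congr_deriv ?_
  have hcosh := (cosh_pos x).ne'
  rw [← cosh_sq']
  field_simp

lemma hasDerivAt_mercatorPullback {f : ℝ → ℝ} {x : ℝ}
    (hf : DifferentiableAt ℝ f (arctan (sinh x))) :
    HasDerivAt (mercatorPullback f)
      (deriv f (arctan (sinh x)) * cosh x + 2 * f (arctan (sinh x)) * sinh x * cosh x) x := by
  refine ((hf.hasDerivAt.comp x (hasDerivAt_arctan_sinh x)).mul
    ((hasDerivAt_cosh x).pow 2)).congr_deriv ?_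
  have hcosh := (cosh_pos x).ne'
  simp only [Function.comp_apply, Pi.pow_apply]
  field_simp
  ring

lemma deriv_mercatorPullback {f : ℝ → ℝ}
    (hf : DifferentiableOn ℝ f (Ioo (-(π / 2)) (π / 2))) :
    deriv (mercatorPullback f) =
      fun x => deriv f (arctan (sinh x)) * cosh x + 2 * f (arctan (sinh x)) * sinh x * cosh x :=
  funext fun x => (hasDerivAt_mercatorPullback
    (hf.differentiableAt (isOpen_Ioo.mem_nhds (arctan_sinh_mem_Ioo x)))).deriv

lemma hasDerivAt_deriv_mercatorPullback {f : ℝ → ℝ}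
    (hf : ContDiffOn ℝ 2 f (Ioo (-(π / 2)) (π / 2))) (x : ℝ) :
    HasDerivAt (deriv (mercatorPullback f))
      (deriv (deriv f) (arctan (sinh x)) + 3 * deriv f (arctan (sinh x)) * sinh x
        + 2 * f (arctan (sinh x)) * (cosh x ^ 2 + sinh x ^ 2)) x := by
  have hmem := isOpen_Ioo.mem_nhds (arctan_sinh_mem_Ioo x)
  have hf' : HasDerivAt f (deriv f (arctan (sinh x))) (arctan (sinh x)) :=
    ((hf.contDiffAt hmem).differentiableAt (by norm_num)).hasDerivAt
  have hf'' : HasDerivAt (deriv f) (deriv (deriv f) (arctan (sinh x))) (arctan (sinh x)) :=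
    (((hf.deriv_of_isOpen isOpen_Ioo (by norm_num : (1 : WithTop ℕ∞) + 1 ≤ 2)).contDiffAt
      hmem).differentiableAt one_ne_zero).hasDerivAt
  rw [deriv_mercatorPullback (hf.differentiableOn (by norm_num))]
  have hφ := hasDerivAt_arctan_sinh x
  refine (((hf''.comp x hφ).mul (hasDerivAt_cosh x)).add
    ((((hf'.comp x hφ).const_mul 2).mul (hasDerivAt_sinh x)).mul
      (hasDerivAt_cosh x))).congr_deriv ?_
  have hcosh := (cosh_pos x).ne'
  simp only [Function.comp_apply, Pi.mul_apply]
  field_simp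
  ring

lemma cylindrical_defect_eq_cosh_sq_mul_radial_defect {v w : ℝ → ℝ → ℝ} {t : ℝ}
    (hv : ContDiffOn ℝ 2 (fun ψ => v ψ t) (Ioo (-(π / 2)) (π / 2)))
    (hw : ∀ x t, w x t = v (arctan (sinh x)) t * cosh x ^ 2) (x : ℝ) :
    deriv (fun s => w x s) t - (w x t * deriv (deriv (fun s => w s t)) x
        - deriv (fun s => w s t) x ^ 2)
      = cosh x ^ 2 * (deriv (fun s => v (arctan (sinh x)) s) t
        - (v (arctan (sinh x)) t * (deriv (deriv (fun s => v s t)) (arctan (sinh x))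
            - tan (arctan (sinh x)) * deriv (fun s => v s t) (arctan (sinh x)))
          - deriv (fun s => v s t) (arctan (sinh x)) ^ 2
          + 2 * v (arctan (sinh x)) t ^ 2)) := by
  have hwx : (fun s => w s t) = mercatorPullback (fun ψ => v ψ t) := funext fun s => hw s t
  have hwt : (fun s => w x s) = fun s => v (arctan (sinh x)) s * cosh x ^ 2 :=
    funext fun s => hw x s
  rw [hwt, deriv_mul_const_field, hw, hwx, (hasDerivAt_deriv_mercatorPullback hv x).deriv,
    deriv_mercatorPullback (hv.differentiableOn (by norm_num)), tan_arctan]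
  linear_combination (-2 * v (arctan (sinh x)) t ^ 2 * cosh x ^ 2) * cosh_sq x

theorem radial_iff_cylindrical_pressure_general
    (I : Set ℝ)
    (v : ℝ → ℝ → ℝ)
    (hψreg : ∀ t ∈ I, ContDiffOn ℝ 2 (fun ψ => v ψ t) (Set.Ioo (-(π / 2)) (π / 2)))
    (w : ℝ → ℝ → ℝ)
    (hw : ∀ x t, w x t = v (Real.arctan (Real.sinh x)) t * (Real.cosh x) ^ 2) :
    (∀ ψ ∈ Set.Ioo (-(π / 2)) (π / 2), ∀ t ∈ I,
        deriv (fun s => v ψ s) t =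
          v ψ t * (deriv (deriv (fun s => v s t)) ψ
              - Real.tan ψ * deriv (fun s => v s t) ψ)
            - (deriv (fun s => v s t) ψ) ^ 2 + 2 * (v ψ t) ^ 2)
    ↔ (∀ x : ℝ, ∀ t ∈ I,
        deriv (fun s => w x s) t =
          w x t * deriv (deriv (fun s => w s t)) x
            - (deriv (fun s => w s t) x) ^ 2) := by
  constructor
  · intro hrad x t ht
    have hdefect := cylindrical_defect_eq_cosh_sq_mul_radial_defect (hψreg t ht) hw x
    rw [hrad _ (arctan_sinh_mem_Ioo x) t ht, sub_self, mul_zero, sub_eq_zero] at hdefect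
    exact hdefect
  · intro hcyl ψ hψ t ht
    have hdefect := cylindrical_defect_eq_cosh_sq_mul_radial_defect (hψreg t ht) hw
      (arsinh (tan ψ))
    rw [hcyl _ t ht, sub_self, arctan_sinh_arsinh_tan hψ, eq_comm, mul_eq_zero,
      sub_eq_zero] at hdefect
    exact hdefect.resolve_left (pow_ne_zero 2 (cosh_pos _).ne')

/-- Equivalence of the radial pressure equation on the sphere,
`v_t = v·(v_ψψ - tan ψ · v_ψ) - v_ψ² + 2v²` on `(-π/2, π/2) × I`, with the
cylindrical pressure equation `w_t = w·w_xx - w_x²` on `ℝ × I`, where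
`w(x,t) = v(arctan(sinh x), t)·cosh² x` (Mercator's projection). -/
theorem radial_iff_cylindrical_pressure
    (I : Set ℝ) (hI : I.OrdConnected)
    (v : ℝ → ℝ → ℝ)
    (hpos : ∀ ψ ∈ Set.Ioo (-(π / 2)) (π / 2), ∀ t ∈ I, 0 < v ψ t)
    (hψreg : ∀ t ∈ I, ContDiffOn ℝ 2 (fun ψ => v ψ t) (Set.Ioo (-(π / 2)) (π / 2)))
    (htreg : ∀ ψ ∈ Set.Ioo (-(π / 2)) (π / 2), ContDiffOn ℝ 1 (fun t => v ψ t) I)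
    (w : ℝ → ℝ → ℝ)
    (hw : ∀ x t, w x t = v (Real.arctan (Real.sinh x)) t * (Real.cosh x) ^ 2) :
    (∀ ψ ∈ Set.Ioo (-(π / 2)) (π / 2), ∀ t ∈ I,
        deriv (fun s => v ψ s) t =
          v ψ t * (deriv (deriv (fun s => v s t)) ψ
              - Real.tan ψ * deriv (fun s => v s t) ψ)
            - (deriv (fun s => v s t) ψ) ^ 2 + 2 * (v ψ t) ^ 2)
    ↔ (∀ x : ℝ, ∀ t ∈ I,
        deriv (fun s => w x s) t =
          w x t * deriv (deriv (fun s => w s t)) x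
            - (deriv (fun s => w s t) x) ^ 2) :=
  radial_iff_cylindrical_pressure_general I v hψreg w hw
end

section
/- Let t₀ < 0 and C₀ > 0. Let v: [-π/2, π/2] × (-∞, t₀] → ℝ be positive, twice continuously differentiable in ψ up to the endpoints with ∂_ψ v(±π/2, t) = 0 for every t, continuously differentiable in t, and satisfy the radial pressure equation ∂_t v = v·(∂_ψψ v - tan(ψ)·∂_ψ v) - (∂_ψ v)² + 2v² on (-π/2, π/2) × (-∞, t₀]. Set R := (∂_t v)/v, and assume: (a) v ≤ C₀ and 0 < R ≤ C₀ everywhere; (b) the Harnack inequality ∂_ψψ R - tan(ψ)·∂_ψ R + R²/v ≥ (∂_ψ R)²/R holds on (-π/2, π/2) × (-∞, t₀]. Then there is a constant C, depending only on C₀, such that |∂_ψψ v - tan(ψ)·∂_ψ v| ≤ C and (∂_ψ v)²/v ≤ C on (-π/2, π/2) × (-∞, t₀]. -/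
/-!
Fix a time and write `w` for the spatial profile of `v`; by the pressure equation
`R = w'' - tan ψ · w' - w'² / w + 2 w`. The flux `G = w' cos ψ / w + 2 sin ψ` satisfies
`G' = R cos ψ / w > 0` and `G(±π/2) = ±2`, so `-2 < G < 2` inside, and
`w'² / w = (2 sin ψ - G)² w / cos² ψ`. By the symmetry `ψ ↦ -ψ` we may assume `w' ≤ 0`,
i.e. `G ≤ 2 sin ψ`. If `G(ψ) > 0`, then `G² / 2 + C₀ cos² / w` is nonincreasing on `[ψ, π/2]`
because `R ≤ C₀`, and it equals `2` at the pole. If `G(ψ) ≤ 0 < ψ`, then `w / cos²` is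
nonincreasing on `[0, ψ]`, so `w(ψ) ≤ C₀ cos² ψ`. If `ψ ≤ 0`, the bound is elementary.
The bound on the Laplacian then follows from the formula for `R`.
-/

open Real Set

/-- First spatial derivative `∂_ψ v`. -/
noncomputable def dps (v : ℝ → ℝ → ℝ) (ψ t : ℝ) : ℝ := deriv (fun s => v s t) ψ

/-- Second spatial derivative `∂_ψψ v`. -/
noncomputable def dpsps (v : ℝ → ℝ → ℝ) (ψ t : ℝ) : ℝ := deriv (deriv (fun s => v s t)) ψ

/-- Time derivative `∂_t v`. -/
noncomputable def dtime (v : ℝ → ℝ → ℝ) (ψ t : ℝ) : ℝ := deriv (fun s => v ψ s) t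

/-- Scalar curvature `R = v_t / v`. -/
noncomputable def scurv (v : ℝ → ℝ → ℝ) (ψ t : ℝ) : ℝ := dtime v ψ t / v ψ t

/-- The scalar curvature `v_t / v`, rewritten through the radial pressure equation. -/
noncomputable def pressureCurvature (w : ℝ → ℝ) (x : ℝ) : ℝ :=
  deriv (deriv w) x - tan x * deriv w x - deriv w x ^ 2 / w x + 2 * w x

/-- `derivWithin` keeps the flux continuous up to the poles, where `deriv w` need not exist. -/
noncomputable def pressureFlux (w : ℝ → ℝ) (x : ℝ) : ℝ :=
  derivWithin w (Icc (-(π / 2)) (π / 2)) x * cos x / w x + 2 * sin x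

lemma pressureCurvature_comp_neg (w : ℝ → ℝ) (x : ℝ) :
    pressureCurvature (fun y => w (-y)) x = pressureCurvature w (-x) := by
  have h : deriv (fun y => w (-y)) = fun y => -deriv w (-y) := funext fun y => deriv_comp_neg w y
  simp only [pressureCurvature, h, deriv.fun_neg, deriv_comp_neg, neg_neg, tan_neg]
  ring

section Flux

variable {w : ℝ → ℝ} {C₀ a b x : ℝ}

lemma pressureFlux_neg_pi_div_two : pressureFlux w (-(π / 2)) = -2 := by
  simp [pressureFlux]

lemma pressureFlux_pi_div_two : pressureFlux w (π / 2) = 2 := by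
  simp [pressureFlux]

lemma pressureFlux_of_mem_Ioo (hx : x ∈ Ioo (-(π / 2)) (π / 2)) :
    pressureFlux w x = deriv w x * cos x / w x + 2 * sin x := by
  rw [pressureFlux, derivWithin_of_mem_nhds (Icc_mem_nhds hx.1 hx.2)]

lemma sq_deriv_div_eq_pressureFlux (hx : x ∈ Ioo (-(π / 2)) (π / 2)) (hwx : w x ≠ 0) :
    deriv w x ^ 2 / w x = (2 * sin x - pressureFlux w x) ^ 2 * w x / cos x ^ 2 := by
  have hcos : cos x ≠ 0 := (cos_pos_of_mem_Ioo hx).ne'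
  rw [pressureFlux_of_mem_Ioo hx]
  field_simp
  ring

lemma continuousOn_pressureFlux (hw : ContDiffOn ℝ 2 w (Icc (-(π / 2)) (π / 2)))
    (hw_pos : ∀ x ∈ Icc (-(π / 2)) (π / 2), 0 < w x) :
    ContinuousOn (pressureFlux w) (Icc (-(π / 2)) (π / 2)) :=
  (((hw.continuousOn_derivWithin (uniqueDiffOn_Icc (by linarith [pi_pos])) (by norm_num)).mul
    continuous_cos.continuousOn).div hw.continuousOn fun x hx => (hw_pos x hx).ne').add
    (continuous_const.mul continuous_sin).continuousOn

lemma hasDerivAt_pressureFlux (hw : ContDiffOn ℝ 2 w (Icc (-(π / 2)) (π / 2)))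
    (hx : x ∈ Ioo (-(π / 2)) (π / 2)) (hwx : w x ≠ 0) :
    HasDerivAt (pressureFlux w) (cos x * pressureCurvature w x / w x) x := by
  have hw_at : ContDiffAt ℝ 2 w x := hw.contDiffAt (Icc_mem_nhds hx.1 hx.2)
  have hw' : HasDerivAt w (deriv w x) x := (hw_at.differentiableAt (by norm_num)).hasDerivAt
  have hw'' : HasDerivAt (deriv w) (deriv (deriv w) x) x :=
    ((hw_at.derivWithin (m := 1) (by norm_num)).differentiableAt one_ne_zero).hasDerivAt
  have hcos : cos x ≠ 0 := (cos_pos_of_mem_Ioo hx).ne'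
  refine ((((hw''.mul (hasDerivAt_cos x)).div hw' hwx).add
    ((hasDerivAt_sin x).const_mul 2)).congr_of_eventuallyEq ?_).congr_deriv ?_
  · filter_upwards [isOpen_Ioo.mem_nhds hx] with y hy using pressureFlux_of_mem_Ioo hy
  · rw [pressureCurvature, tan_eq_sin_div_cos, Pi.mul_apply]
    field_simp
    ring

lemma strictMonoOn_pressureFlux (hw : ContDiffOn ℝ 2 w (Icc (-(π / 2)) (π / 2)))
    (hw_pos : ∀ x ∈ Icc (-(π / 2)) (π / 2), 0 < w x)
    (hR_pos : ∀ x ∈ Ioo (-(π / 2)) (π / 2), 0 < pressureCurvature w x) :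
    StrictMonoOn (pressureFlux w) (Icc (-(π / 2)) (π / 2)) := by
  refine strictMonoOn_of_hasDerivWithinAt_pos (convex_Icc _ _) (continuousOn_pressureFlux hw hw_pos)
    (f' := fun x => cos x * pressureCurvature w x / w x) (fun x hx => ?_) fun x hx => ?_ <;>
    simp only [interior_Icc] at hx ⊢
  · exact (hasDerivAt_pressureFlux hw hx (hw_pos x (Ioo_subset_Icc_self hx)).ne').hasDerivWithinAt
  · have := hw_pos x (Ioo_subset_Icc_self hx)
    have := cos_pos_of_mem_Ioo hx
    have := hR_pos x hx
    positivity

lemma pressureFlux_mem_Ioo (hw : ContDiffOn ℝ 2 w (Icc (-(π / 2)) (π / 2)))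
    (hw_pos : ∀ x ∈ Icc (-(π / 2)) (π / 2), 0 < w x)
    (hR_pos : ∀ x ∈ Ioo (-(π / 2)) (π / 2), 0 < pressureCurvature w x)
    (hx : x ∈ Ioo (-(π / 2)) (π / 2)) : pressureFlux w x ∈ Ioo (-2) 2 := by
  have hG := strictMonoOn_pressureFlux hw hw_pos hR_pos
  have hπ : 0 < π / 2 := by positivity
  have h_south := hG (left_mem_Icc.2 (by linarith)) (Ioo_subset_Icc_self hx) hx.1
  have h_north := hG (Ioo_subset_Icc_self hx) (right_mem_Icc.2 (by linarith)) hx.2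
  rw [pressureFlux_neg_pi_div_two] at h_south
  rw [pressureFlux_pi_div_two] at h_north
  exact ⟨h_south, h_north⟩

/-- Where the flux is positive, `G² / 2 + C₀ cos² / w` decreases towards its value `2` at the
north pole. -/
lemma four_sub_sq_pressureFlux_mul_le (hw : ContDiffOn ℝ 2 w (Icc (-(π / 2)) (π / 2)))
    (hw_pos : ∀ x ∈ Icc (-(π / 2)) (π / 2), 0 < w x)
    (hR_pos : ∀ x ∈ Ioo (-(π / 2)) (π / 2), 0 < pressureCurvature w x)
    (hR_le : ∀ x ∈ Ioo (-(π / 2)) (π / 2), pressureCurvature w x ≤ C₀)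
    (ha : a ∈ Ioo (-(π / 2)) (π / 2)) (hGa : 0 < pressureFlux w a) :
    (4 - pressureFlux w a ^ 2) * w a ≤ 2 * C₀ * cos a ^ 2 := by
  set Φ : ℝ → ℝ := fun x => pressureFlux w x ^ 2 / 2 + C₀ * cos x ^ 2 / w x
  have hsub : Icc a (π / 2) ⊆ Icc (-(π / 2)) (π / 2) := Icc_subset_Icc_left ha.1.le
  have hΦ_cont : ContinuousOn Φ (Icc a (π / 2)) :=
    ((((continuousOn_pressureFlux hw hw_pos).mono hsub).pow 2).div_const 2).add
      ((continuous_const.mul (continuous_cos.pow 2)).continuousOn.div (hw.continuousOn.mono hsub)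
        fun x hx => (hw_pos x (hsub hx)).ne')
  have hΦ_anti : AntitoneOn Φ (Icc a (π / 2)) := by
    refine antitoneOn_of_hasDerivWithinAt_nonpos (convex_Icc _ _) hΦ_cont
      (f' := fun x => pressureFlux w x * cos x / w x * (pressureCurvature w x - C₀))
      (fun x hx => ?_) fun x hx => ?_ <;> simp only [interior_Icc] at hx ⊢
    all_goals
      have hxI : x ∈ Ioo (-(π / 2)) (π / 2) := ⟨ha.1.trans hx.1, hx.2⟩
      have hwx := hw_pos x (Ioo_subset_Icc_self hxI)
    · have hw' : HasDerivAt w (deriv w x) x :=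
        ((hw.contDiffAt (Icc_mem_nhds hxI.1 hxI.2)).differentiableAt (by norm_num)).hasDerivAt
      refine (((hasDerivAt_pressureFlux hw hxI hwx.ne').pow 2).div_const 2 |>.add
        ((((hasDerivAt_cos x).pow 2).const_mul C₀).div hw' hwx.ne')).hasDerivWithinAt.congr_deriv ?_
      have hcos : cos x ≠ 0 := (cos_pos_of_mem_Ioo hxI).ne'
      have hwx' : w x ≠ 0 := hwx.ne'
      rw [pressureFlux_of_mem_Ioo hxI, Pi.pow_apply, Nat.cast_ofNat, Nat.add_one_sub_one, pow_one]
      field_simp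
      ring
    · have hGx : 0 < pressureFlux w x :=
        hGa.trans (strictMonoOn_pressureFlux hw hw_pos hR_pos (Ioo_subset_Icc_self ha)
          (hsub (Ioo_subset_Icc_self hx)) hx.1)
      have := cos_pos_of_mem_Ioo hxI
      exact mul_nonpos_of_nonneg_of_nonpos (by positivity) (sub_nonpos.2 (hR_le x hxI))
  have hΦ_pole : Φ (π / 2) = 2 := by
    simp only [Φ, pressureFlux_pi_div_two, cos_pi_div_two]
    norm_num
  have hΦ : 2 ≤ Φ a :=
    hΦ_pole ▸ hΦ_anti (left_mem_Icc.2 ha.2.le) (right_mem_Icc.2 ha.2.le) ha.2.le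
  have hwa := hw_pos a (Ioo_subset_Icc_self ha)
  have key : 2 * C₀ * cos a ^ 2 - (4 - pressureFlux w a ^ 2) * w a = 2 * w a * (Φ a - 2) := by
    simp only [Φ]
    field_simp
    ring
  nlinarith [mul_nonneg hwa.le (sub_nonneg.2 hΦ)]

lemma antitoneOn_div_cos_sq (hw : ContDiffOn ℝ 2 w (Icc (-(π / 2)) (π / 2)))
    (hw_pos : ∀ x ∈ Icc (-(π / 2)) (π / 2), 0 < w x)
    (ha : -(π / 2) < a) (hb : b < π / 2) (hG : ∀ x ∈ Ioo a b, pressureFlux w x ≤ 0) :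
    AntitoneOn (fun x => w x / cos x ^ 2) (Icc a b) := by
  have hsub : Icc a b ⊆ Ioo (-(π / 2)) (π / 2) := Icc_subset_Ioo ha hb
  refine antitoneOn_of_hasDerivWithinAt_nonpos (convex_Icc _ _)
    ((hw.continuousOn.mono (hsub.trans Ioo_subset_Icc_self)).div (continuous_cos.pow 2).continuousOn
      fun x hx => pow_ne_zero 2 (cos_pos_of_mem_Ioo (hsub hx)).ne')
    (f' := fun x => w x * pressureFlux w x / cos x ^ 3)
    (fun x hx => ?_) fun x hx => ?_ <;> simp only [interior_Icc] at hx ⊢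
  all_goals
    have hxI : x ∈ Ioo (-(π / 2)) (π / 2) := hsub (Ioo_subset_Icc_self hx)
    have hcos := cos_pos_of_mem_Ioo hxI
    have hwx := hw_pos x (Ioo_subset_Icc_self hxI)
  · have hw' : HasDerivAt w (deriv w x) x :=
      ((hw.contDiffAt (Icc_mem_nhds hxI.1 hxI.2)).differentiableAt (by norm_num)).hasDerivAt
    refine (hw'.div ((hasDerivAt_cos x).pow 2) (pow_ne_zero 2 hcos.ne')).hasDerivWithinAt
      |>.congr_deriv ?_
    rw [pressureFlux_of_mem_Ioo hxI, Pi.pow_apply]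
    field_simp
    ring
  · exact div_nonpos_of_nonpos_of_nonneg (mul_nonpos_of_nonneg_of_nonpos hwx.le (hG x hx))
      (by positivity)

end Flux

section Gradient

variable {w : ℝ → ℝ} {C₀ x : ℝ}

lemma sq_deriv_div_le_of_deriv_nonpos (hw : ContDiffOn ℝ 2 w (Icc (-(π / 2)) (π / 2)))
    (hw_pos : ∀ x ∈ Icc (-(π / 2)) (π / 2), 0 < w x)
    (hw_le : ∀ x ∈ Icc (-(π / 2)) (π / 2), w x ≤ C₀)
    (hR_pos : ∀ x ∈ Ioo (-(π / 2)) (π / 2), 0 < pressureCurvature w x)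
    (hR_le : ∀ x ∈ Ioo (-(π / 2)) (π / 2), pressureCurvature w x ≤ C₀)
    (hx : x ∈ Ioo (-(π / 2)) (π / 2)) (hw'x : deriv w x ≤ 0) :
    deriv w x ^ 2 / w x ≤ 16 * C₀ := by
  have hπ : 0 < π / 2 := by positivity
  set G := pressureFlux w x with hG_def
  obtain ⟨hG_gt, hG_lt⟩ := pressureFlux_mem_Ioo hw hw_pos hR_pos hx
  have hcos := cos_pos_of_mem_Ioo hx
  have hwx := hw_pos x (Ioo_subset_Icc_self hx)
  have hG_le : G ≤ 2 * sin x := by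
    have : deriv w x * cos x / w x ≤ 0 :=
      div_nonpos_of_nonpos_of_nonneg (mul_nonpos_of_nonpos_of_nonneg hw'x hcos.le) hwx.le
    rw [hG_def, pressureFlux_of_mem_Ioo hx]
    linarith
  rw [sq_deriv_div_eq_pressureFlux hx hwx.ne', div_le_iff₀ (by positivity)]
  have hwx_le := hw_le x (Ioo_subset_Icc_self hx)
  rcases lt_or_ge 0 G with hG_pos | hG_nonpos
  · have h := four_sub_sq_pressureFlux_mul_le hw hw_pos hR_pos hR_le hx hG_pos
    have hsq : (2 * sin x - G) ^ 2 ≤ 4 - G ^ 2 := by nlinarith [sin_le_one x]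
    nlinarith [mul_le_mul_of_nonneg_right hsq hwx.le]
  rcases le_or_gt x 0 with hx_nonpos | hx_pos
  · have hsin : sin x ≤ 0 := sin_nonpos_of_nonpos_of_neg_pi_le hx_nonpos (by linarith [hx.1])
    have hsq : (2 * sin x - G) ^ 2 ≤ 4 * cos x ^ 2 := by
      nlinarith [neg_one_le_sin x, sin_sq_add_cos_sq x]
    nlinarith [mul_le_mul hsq hwx_le hwx.le (by positivity)]
  · have hG_neg : ∀ y ∈ Ioo 0 x, pressureFlux w y ≤ 0 := fun y hy =>
      ((strictMonoOn_pressureFlux hw hw_pos hR_pos ⟨by linarith [hy.1], by linarith [hy.2, hx.2]⟩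
        (Ioo_subset_Icc_self hx) hy.2).le).trans hG_nonpos
    have h := antitoneOn_div_cos_sq hw hw_pos (by linarith) hx.2 hG_neg
      (left_mem_Icc.2 hx_pos.le) (right_mem_Icc.2 hx_pos.le) hx_pos.le
    simp only [cos_zero, one_pow, div_one] at h
    rw [div_le_iff₀ (by positivity)] at h
    have hw_cos : w x ≤ C₀ * cos x ^ 2 :=
      h.trans (mul_le_mul_of_nonneg_right (hw_le 0 ⟨by linarith, by linarith⟩) (by positivity))
    have hsq : (2 * sin x - G) ^ 2 ≤ 16 := by nlinarith [sin_le_one x]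
    nlinarith [mul_le_mul hsq hw_cos hwx.le (by norm_num)]

lemma sq_deriv_div_le (hw : ContDiffOn ℝ 2 w (Icc (-(π / 2)) (π / 2)))
    (hw_pos : ∀ x ∈ Icc (-(π / 2)) (π / 2), 0 < w x)
    (hw_le : ∀ x ∈ Icc (-(π / 2)) (π / 2), w x ≤ C₀)
    (hR_pos : ∀ x ∈ Ioo (-(π / 2)) (π / 2), 0 < pressureCurvature w x)
    (hR_le : ∀ x ∈ Ioo (-(π / 2)) (π / 2), pressureCurvature w x ≤ C₀)
    (hx : x ∈ Ioo (-(π / 2)) (π / 2)) :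
    deriv w x ^ 2 / w x ≤ 16 * C₀ := by
  rcases le_or_gt (deriv w x) 0 with hw'x | hw'x
  · exact sq_deriv_div_le_of_deriv_nonpos hw hw_pos hw_le hR_pos hR_le hx hw'x
  have hneg_Icc : MapsTo (fun y : ℝ => -y) (Icc (-(π / 2)) (π / 2)) (Icc (-(π / 2)) (π / 2)) :=
    fun y hy => ⟨by linarith [hy.2], by linarith [hy.1]⟩
  have hneg_Ioo : MapsTo (fun y : ℝ => -y) (Ioo (-(π / 2)) (π / 2)) (Ioo (-(π / 2)) (π / 2)) :=
    fun y hy => ⟨by linarith [hy.2], by linarith [hy.1]⟩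
  have h := sq_deriv_div_le_of_deriv_nonpos (w := fun y => w (-y))
    (hw.comp contDiff_neg.contDiffOn hneg_Icc) (fun y hy => hw_pos _ (hneg_Icc hy))
    (fun y hy => hw_le _ (hneg_Icc hy))
    (fun y hy => pressureCurvature_comp_neg w y ▸ hR_pos _ (hneg_Ioo hy))
    (fun y hy => pressureCurvature_comp_neg w y ▸ hR_le _ (hneg_Ioo hy)) (hneg_Ioo hx)
    (by rw [deriv_comp_neg, neg_neg]; linarith)
  simpa [deriv_comp_neg] using h

end Gradient

lemma scurv_eq_pressureCurvature {v : ℝ → ℝ → ℝ} {x t : ℝ} (hv : v x t ≠ 0)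
    (hPDE : dtime v x t =
      v x t * (dpsps v x t - tan x * dps v x t) - dps v x t ^ 2 + 2 * v x t ^ 2) :
    scurv v x t = pressureCurvature (fun s => v s t) x := by
  rw [scurv, hPDE, pressureCurvature]
  simp only [dpsps, dps]
  field_simp

/-- A priori second order estimates: for any ancient radial solution of the pressure
equation with `v ≤ C₀`, `0 < R ≤ C₀` and satisfying Hamilton's Harnack inequality,
the spherical Laplacian `Δ_{S²} v = v_ψψ - tan ψ · v_ψ` and the quantity `v_ψ²/v`
are bounded by a constant depending only on `C₀`. -/
theorem second_order_apriori_estimates :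
    ∀ C₀ : ℝ, 0 < C₀ → ∃ C : ℝ,
      ∀ t₀ : ℝ, t₀ < 0 →
      ∀ v : ℝ → ℝ → ℝ,
      -- positivity
      (∀ ψ ∈ Set.Icc (-(π / 2)) (π / 2), ∀ t ≤ t₀, 0 < v ψ t) →
      -- twice continuously differentiable in ψ up to the endpoints
      (∀ t ≤ t₀, ContDiffOn ℝ 2 (fun ψ => v ψ t) (Set.Icc (-(π / 2)) (π / 2))) →
      -- smoothness at the poles
      (∀ t ≤ t₀, dps v (-(π / 2)) t = 0 ∧ dps v (π / 2) t = 0) →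
      -- continuously differentiable in t
      (∀ ψ ∈ Set.Icc (-(π / 2)) (π / 2), ContDiffOn ℝ 1 (fun s => v ψ s) (Set.Iic t₀)) →
      -- the radial pressure equation
      (∀ ψ ∈ Set.Ioo (-(π / 2)) (π / 2), ∀ t ≤ t₀,
        dtime v ψ t =
          v ψ t * (dpsps v ψ t - Real.tan ψ * dps v ψ t)
            - (dps v ψ t) ^ 2 + 2 * (v ψ t) ^ 2) →
      -- (a): uniform bounds on v and on the scalar curvature R = v_t/v
      (∀ ψ ∈ Set.Icc (-(π / 2)) (π / 2), ∀ t ≤ t₀,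
        v ψ t ≤ C₀ ∧ 0 < scurv v ψ t ∧ scurv v ψ t ≤ C₀) →
      -- (b): Hamilton's Harnack inequality
      (∀ ψ ∈ Set.Ioo (-(π / 2)) (π / 2), ∀ t ≤ t₀,
        dpsps (scurv v) ψ t - Real.tan ψ * dps (scurv v) ψ t
            + (scurv v ψ t) ^ 2 / v ψ t
          ≥ (dps (scurv v) ψ t) ^ 2 / scurv v ψ t) →
      -- conclusion: uniform second order estimates
      (∀ ψ ∈ Set.Ioo (-(π / 2)) (π / 2), ∀ t ≤ t₀,
        |dpsps v ψ t - Real.tan ψ * dps v ψ t| ≤ C ∧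
        (dps v ψ t) ^ 2 / v ψ t ≤ C) := by
  intro C₀ _
  refine ⟨17 * C₀, fun t₀ _ v hv_pos hv_C2 _ _ hPDE hbounds _ ψ hψ t ht => ?_⟩
  have hR : ∀ x ∈ Ioo (-(π / 2)) (π / 2), pressureCurvature (fun s => v s t) x = scurv v x t :=
    fun x hx => (scurv_eq_pressureCurvature (hv_pos x (Ioo_subset_Icc_self hx) t ht).ne'
      (hPDE x hx t ht)).symm
  have hgrad := sq_deriv_div_le (hv_C2 t ht) (fun x hx => hv_pos x hx t ht)
    (fun x hx => (hbounds x hx t ht).1)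
    (fun x hx => hR x hx ▸ (hbounds x (Ioo_subset_Icc_self hx) t ht).2.1)
    (fun x hx => hR x hx ▸ (hbounds x (Ioo_subset_Icc_self hx) t ht).2.2) hψ
  obtain ⟨hv_le, hR_pos, hR_le⟩ := hbounds ψ (Ioo_subset_Icc_self hψ) t ht
  have hvψ := hv_pos ψ (Ioo_subset_Icc_self hψ) t ht
  have hgrad_nonneg : 0 ≤ deriv (fun s => v s t) ψ ^ 2 / v ψ t := by positivity
  rw [← hR ψ hψ, pressureCurvature] at hR_pos hR_le
  simp only [dpsps, dps]
  exact ⟨abs_le.2 ⟨by linarith, by linarith⟩, by linarith⟩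
end

section
/- Let v: (-π/2, π/2) × ℝ → ℝ be twice continuously differentiable, 2π-periodic in the second variable θ. Suppose there are constants M, K ≥ 0 such that |∂_θ v(ψ,θ)| ≤ M for all (ψ,θ), and sec²(ψ)·|∂_θθ v(ψ,θ) + tan(ψ)·∂_θ v(ψ,θ)| ≤ K for all (ψ,θ). Then sec²(ψ)·|∂_θ v(ψ,θ)| ≤ max(K, 2M) for all (ψ,θ) ∈ (-π/2, π/2) × ℝ. -/
open Real Set Function

/-! On a fixed latitude `w := v_θ` is a `2π`-periodic function of `θ`, so it attains its maximum
and minimum, where `w' = 0`. There the bound on `sec²ψ · |w' + tan ψ · w|` becomes a bound on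
`sec²ψ · |tan ψ| · |w|`, which controls `sec²ψ · |w|` as soon as `|tan ψ| ≥ 1`, i.e. `sec²ψ ≥ 2`.
When `sec²ψ ≤ 2`, the bound `|w| ≤ M` gives `2M` directly. -/

theorem Function.Periodic.deriv {𝕜 F : Type*} [NontriviallyNormedField 𝕜] [NormedAddCommGroup F]
    [NormedSpace 𝕜 F] {f : 𝕜 → F} {c : 𝕜} (hf : Periodic f c) : Periodic (_root_.deriv f) c :=
  fun x => by rw [← deriv_comp_add_const, show (fun y => f (y + c)) = f from funext hf]

section PeriodicExtrema

variable {α : Type*} [LinearOrder α] [TopologicalSpace α] [OrderClosedTopology α]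
  {f : ℝ → α} {c : ℝ}

theorem Function.Periodic.exists_forall_ge_of_continuous (hp : Periodic f c) (hc : c ≠ 0)
    (hf : Continuous f) : ∃ a, ∀ x, f x ≤ f a := by
  obtain ⟨_, ⟨a, rfl⟩, ha⟩ :=
    (hp.compact_of_continuous hc hf).exists_isGreatest (range_nonempty f)
  exact ⟨a, fun x => ha ⟨x, rfl⟩⟩

theorem Function.Periodic.exists_forall_le_of_continuous (hp : Periodic f c) (hc : c ≠ 0)
    (hf : Continuous f) : ∃ b, ∀ x, f b ≤ f x := by
  obtain ⟨_, ⟨b, rfl⟩, hb⟩ :=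
    (hp.compact_of_continuous hc hf).exists_isLeast (range_nonempty f)
  exact ⟨b, fun x => hb ⟨x, rfl⟩⟩

end PeriodicExtrema

theorem mul_abs_le_of_periodic_of_mul_abs_deriv_add_mul_le {w : ℝ → ℝ} {T c t K : ℝ}
    (hp : Periodic w T) (hT : T ≠ 0) (hw : Differentiable ℝ w) (hc : 0 ≤ c) (ht : 1 ≤ |t|)
    (hK : ∀ θ, c * |deriv w θ + t * w θ| ≤ K) (θ : ℝ) : c * |w θ| ≤ K := by
  have at_critical : ∀ p, deriv w p = 0 → c * |w p| ≤ K := fun p hp0 =>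
    calc c * |w p| ≤ c * (|t| * |w p|) := by gcongr; exact le_mul_of_one_le_left (abs_nonneg _) ht
      _ = c * |deriv w p + t * w p| := by rw [hp0, zero_add, abs_mul]
      _ ≤ K := hK p
  obtain ⟨a, ha⟩ := hp.exists_forall_ge_of_continuous hT hw.continuous
  obtain ⟨b, hb⟩ := hp.exists_forall_le_of_continuous hT hw.continuous
  have hKa := at_critical a (IsLocalMax.deriv_eq_zero (Filter.Eventually.of_forall ha))
  have hKb := at_critical b (IsLocalMin.deriv_eq_zero (Filter.Eventually.of_forall hb))
  calc c * |w θ| ≤ c * max |w b| |w a| := by gcongr; exact abs_le_max_abs_abs (hb θ) (ha θ)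
    _ = max (c * |w b|) (c * |w a|) := mul_max_of_nonneg _ _ hc
    _ ≤ K := max_le hKb hKa

theorem Real.one_le_abs_tan_of_two_le_sec_sq {ψ : ℝ} (hψ : cos ψ ≠ 0)
    (h : 2 ≤ (1 / cos ψ) ^ 2) : 1 ≤ |tan ψ| := by
  have sec_sq : (1 / cos ψ) ^ 2 = 1 + tan ψ ^ 2 := by
    rw [one_div, inv_pow, ← inv_one_add_tan_sq hψ, inv_inv]
  rw [← one_le_sq_iff_one_le_abs]
  linarith

theorem sec_sq_vtheta_bound_general
    (v : ℝ → ℝ → ℝ)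
    (hreg : ContDiffOn ℝ 2 (fun p : ℝ × ℝ => v p.1 p.2)
      (Set.Ioo (-(π / 2)) (π / 2) ×ˢ (Set.univ : Set ℝ)))
    (hper : ∀ ψ θ : ℝ, v ψ (θ + 2 * π) = v ψ θ)
    (M K : ℝ)
    (h1 : ∀ ψ ∈ Set.Ioo (-(π / 2)) (π / 2), ∀ θ : ℝ,
      |deriv (fun s => v ψ s) θ| ≤ M)
    (h2 : ∀ ψ ∈ Set.Ioo (-(π / 2)) (π / 2), ∀ θ : ℝ,
      (1 / Real.cos ψ) ^ 2 *
          |deriv (deriv (fun s => v ψ s)) θ + Real.tan ψ * deriv (fun s => v ψ s) θ| ≤ K) :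
    ∀ ψ ∈ Set.Ioo (-(π / 2)) (π / 2), ∀ θ : ℝ,
      (1 / Real.cos ψ) ^ 2 * |deriv (fun s => v ψ s) θ| ≤ max K (2 * M) := by
  intro ψ hψ θ
  have slice_contDiff : ContDiff ℝ 2 (fun s => v ψ s) :=
    hreg.comp_contDiff (contDiff_const.prodMk contDiff_id) fun _ => ⟨hψ, trivial⟩
  have slice_periodic : Periodic (fun s => v ψ s) (2 * π) := hper ψ
  rcases le_total 2 ((1 / cos ψ) ^ 2) with hsec | hsec
  · have htan := one_le_abs_tan_of_two_le_sec_sq (cos_pos_of_mem_Ioo hψ).ne' hsec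
    exact (mul_abs_le_of_periodic_of_mul_abs_deriv_add_mul_le slice_periodic.deriv
      two_pi_pos.ne' slice_contDiff.differentiable_deriv_two (sq_nonneg _) htan (h2 ψ hψ) θ).trans
      (le_max_left _ _)
  · calc (1 / cos ψ) ^ 2 * |deriv (fun s => v ψ s) θ| ≤ 2 * M :=
          mul_le_mul hsec (h1 ψ hψ θ) (abs_nonneg _) zero_le_two
      _ ≤ max K (2 * M) := le_max_right _ _

/-- Evaluation at the `θ`-maximum of `v_θ` on each fixed latitude: if `|v_θ| ≤ M` and
`sec²ψ·|v_θθ + tan ψ · v_θ| ≤ K` for a `2π`-periodic (in `θ`) twice continuously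
differentiable function `v` on `(-π/2, π/2) × ℝ`, then `sec²ψ·|v_θ| ≤ max(K, 2M)`. -/
theorem sec_sq_vtheta_bound
    (v : ℝ → ℝ → ℝ)
    (hreg : ContDiffOn ℝ 2 (fun p : ℝ × ℝ => v p.1 p.2)
      (Set.Ioo (-(π / 2)) (π / 2) ×ˢ (Set.univ : Set ℝ)))
    (hper : ∀ ψ θ : ℝ, v ψ (θ + 2 * π) = v ψ θ)
    (M K : ℝ) (hM : 0 ≤ M) (hK : 0 ≤ K)
    (h1 : ∀ ψ ∈ Set.Ioo (-(π / 2)) (π / 2), ∀ θ : ℝ,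
      |deriv (fun s => v ψ s) θ| ≤ M)
    (h2 : ∀ ψ ∈ Set.Ioo (-(π / 2)) (π / 2), ∀ θ : ℝ,
      (1 / Real.cos ψ) ^ 2 *
          |deriv (deriv (fun s => v ψ s)) θ + Real.tan ψ * deriv (fun s => v ψ s) θ| ≤ K) :
    ∀ ψ ∈ Set.Ioo (-(π / 2)) (π / 2), ∀ θ : ℝ,
      (1 / Real.cos ψ) ^ 2 * |deriv (fun s => v ψ s) θ| ≤ max K (2 * M) :=
  sec_sq_vtheta_bound_general v hreg hper M K h1 h2
end

section
/- Let I ⊆ ℝ be an interval and let v: [-π/2, π/2] × I → ℝ be positive, twice continuously differentiable in ψ up to the endpoints with ∂_ψ v(±π/2, t) = 0 for every t ∈ I, differentiable in t, and satisfy the radial pressure equation ∂_t v = v·(∂_ψψ v - tan(ψ)·∂_ψ v) - (∂_ψ v)² + 2v² on (-π/2, π/2) × I. Assume the scalar curvature R := (∂_t v)/v is nonnegative. Then for every t ∈ I, J(t) := ∫_{-π/2}^{π/2} ((∂_ψ v)²/v - 4v)·cos ψ dψ ≤ 0. -/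
/-!
Nonnegative curvature says that the right-hand side of the pressure equation is nonnegative.
Multiplying it by `cos ψ / v` bounds the density `(v_ψ²/v - 4v) cos ψ` of `J` by
`(v_ψ cos ψ)_ψ - 2v cos ψ ≤ (v_ψ cos ψ)_ψ`, and the flux `v_ψ cos ψ` integrates to zero since `cos`
vanishes at both poles.
-/

open Real Set intervalIntegral

open MeasureTheory Filter Topology

section Icc

variable {a b x : ℝ}

theorem derivWithin_Icc_eq_deriv (f : ℝ → ℝ) (hx : x ∈ Ioo a b) :
    derivWithin f (Icc a b) x = deriv f x :=
  derivWithin_of_mem_nhds (Icc_mem_nhds hx.1 hx.2)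

theorem derivWithin_derivWithin_Icc_eq_deriv_deriv (f : ℝ → ℝ) (hx : x ∈ Ioo a b) :
    derivWithin (derivWithin f (Icc a b)) (Icc a b) x = deriv (deriv f) x := by
  have heq : derivWithin f (Icc a b) =ᶠ[𝓝 x] deriv f := by
    filter_upwards [isOpen_Ioo.mem_nhds hx] with y hy using derivWithin_Icc_eq_deriv f hy
  rw [derivWithin_Icc_eq_deriv _ hx, heq.deriv_eq]

theorem integral_derivWithin_mul_add_mul_deriv_eq_zero {w g g' : ℝ → ℝ} (hab : a < b)
    (hw : ContDiffOn ℝ 1 w (Icc a b)) (hg : ∀ x, HasDerivAt g (g' x) x) (hg' : Continuous g')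
    (hga : g a = 0) (hgb : g b = 0) :
    ∫ x in a..b, derivWithin w (Icc a b) x * g x + w x * g' x = 0 := by
  have hIcc : uIcc a b = Icc a b := uIcc_of_le hab.le
  have hw' : ContinuousOn (derivWithin w (Icc a b)) (Icc a b) :=
    hw.continuousOn_derivWithin (uniqueDiffOn_Icc hab) le_rfl
  rw [integral_deriv_mul_eq_sub_of_hasDerivWithinAt (u := w) (v := g), hga, hgb,
    mul_zero, mul_zero, sub_zero]
  · intro x hx
    rw [hIcc] at hx ⊢
    exact ((hw.differentiableOn one_ne_zero) x hx).hasDerivWithinAt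
  · exact fun x _ => (hg x).hasDerivWithinAt
  · exact hw'.intervalIntegrable_of_Icc hab.le
  · exact hg'.intervalIntegrable a b

end Icc

theorem sq_div_sub_four_mul_mul_cos_le {v p q x : ℝ} (hv : 0 < v) (hx : 0 < cos x)
    (h : 0 ≤ v * (q - tan x * p) - p ^ 2 + 2 * v ^ 2) :
    (p ^ 2 / v - 4 * v) * cos x ≤ q * cos x + p * -sin x := by
  have hscaled : 0 ≤ q * cos x - p * sin x - p ^ 2 / v * cos x + 2 * v * cos x := by
    have hexpand : (v * (q - tan x * p) - p ^ 2 + 2 * v ^ 2) * cos x / v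
        = q * cos x - p * sin x - p ^ 2 / v * cos x + 2 * v * cos x := by
      rw [tan_eq_sin_div_cos]
      field_simp
    exact hexpand ▸ div_nonneg (mul_nonneg h hx.le) hv.le
  linarith [mul_pos hv hx]

theorem integral_sq_deriv_div_sub_four_mul_mul_cos_nonpos {u : ℝ → ℝ}
    (hu : ContDiffOn ℝ 2 u (Icc (-(π / 2)) (π / 2)))
    (hpos : ∀ x ∈ Icc (-(π / 2)) (π / 2), 0 < u x)
    (hrhs : ∀ x ∈ Ioo (-(π / 2)) (π / 2),
      0 ≤ u x * (deriv (deriv u) x - tan x * deriv u x) - deriv u x ^ 2 + 2 * u x ^ 2) :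
    ∫ x in -(π / 2)..π / 2, (deriv u x ^ 2 / u x - 4 * u x) * cos x ≤ 0 := by
  have hab : -(π / 2) < π / 2 := by linarith [pi_pos]
  set w := derivWithin u (Icc (-(π / 2)) (π / 2))
  have hw : ContDiffOn ℝ 1 w (Icc (-(π / 2)) (π / 2)) :=
    hu.derivWithin (uniqueDiffOn_Icc hab) le_rfl
  set density := fun x => (w x ^ 2 / u x - 4 * u x) * cos x
  have hdensity : EqOn (fun x => (deriv u x ^ 2 / u x - 4 * u x) * cos x) density
      (uIcc (-(π / 2)) (π / 2)) := by
    intro x hx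
    rw [uIcc_of_le hab.le, ← Ico_insert_right hab.le, ← Ioo_insert_left hab] at hx
    -- at the poles both sides vanish with `cos`, whatever the junk value of `deriv u` there
    rcases hx with rfl | rfl | hx
    · simp [density]
    · simp [density]
    · simp only [density, w, derivWithin_Icc_eq_deriv u hx]
  have hdensity_le : ∀ x ∈ Ioo (-(π / 2)) (π / 2),
      density x ≤ derivWithin w (Icc (-(π / 2)) (π / 2)) x * cos x + w x * -sin x := by
    intro x hx
    rw [derivWithin_derivWithin_Icc_eq_deriv_deriv u hx]
    simp only [density, w, derivWithin_Icc_eq_deriv u hx]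
    exact sq_div_sub_four_mul_mul_cos_le (hpos x (Ioo_subset_Icc_self hx))
      (cos_pos_of_mem_Ioo hx) (hrhs x hx)
  have hdensity_cont : ContinuousOn density (Icc (-(π / 2)) (π / 2)) :=
    (((hw.continuousOn.pow 2).div hu.continuousOn fun x hx => (hpos x hx).ne').sub
      (continuousOn_const.mul hu.continuousOn)).mul continuous_cos.continuousOn
  have hflux_cont : ContinuousOn
      (fun x => derivWithin w (Icc (-(π / 2)) (π / 2)) x * cos x + w x * -sin x)
      (Icc (-(π / 2)) (π / 2)) :=
    ((hw.continuousOn_derivWithin (uniqueDiffOn_Icc hab) le_rfl).mul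
      continuous_cos.continuousOn).add (hw.continuousOn.mul continuous_sin.neg.continuousOn)
  rw [integral_congr hdensity, ← integral_derivWithin_mul_add_mul_deriv_eq_zero hab hw
    hasDerivAt_cos continuous_sin.neg (by simp) cos_pi_div_two]
  exact integral_mono_on_of_le_Ioo hab.le (hdensity_cont.intervalIntegrable_of_Icc hab.le)
    (hflux_cont.intervalIntegrable_of_Icc hab.le) hdensity_le

theorem lyapunov_nonpositive_general
    (I : Set ℝ)
    (v : ℝ → ℝ → ℝ)
    (hpos : ∀ ψ ∈ Set.Icc (-(π / 2)) (π / 2), ∀ t ∈ I, 0 < v ψ t)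
    (hψreg : ∀ t ∈ I, ContDiffOn ℝ 2 (fun ψ => v ψ t) (Set.Icc (-(π / 2)) (π / 2)))
    (hpde : ∀ ψ ∈ Set.Ioo (-(π / 2)) (π / 2), ∀ t ∈ I,
      dtime v ψ t =
        v ψ t * (dpsps v ψ t - Real.tan ψ * dps v ψ t)
          - (dps v ψ t) ^ 2 + 2 * (v ψ t) ^ 2)
    (hR : ∀ ψ ∈ Set.Icc (-(π / 2)) (π / 2), ∀ t ∈ I, 0 ≤ dtime v ψ t / v ψ t) :
    ∀ t ∈ I,
      (∫ ψ in (-(π / 2))..(π / 2), ((dps v ψ t) ^ 2 / v ψ t - 4 * v ψ t) * Real.cos ψ)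
        ≤ 0 := by
  intro t ht
  refine integral_sq_deriv_div_sub_four_mul_mul_cos_nonpos (hψreg t ht)
    (fun ψ hψ => hpos ψ hψ t ht) fun ψ hψ => ?_
  have hψ' := Ioo_subset_Icc_self hψ
  have hdtime : 0 ≤ dtime v ψ t := by
    simpa using (le_div_iff₀ (hpos ψ hψ' t ht)).mp (hR ψ hψ' t ht)
  exact hpde ψ hψ t ht ▸ hdtime

/-- Along a radial solution of the pressure equation with nonnegative scalar curvature
`R = v_t/v`, the Lyapunov functional `J(t) = ∫_{-π/2}^{π/2} (v_ψ²/v - 4v)·cos ψ dψ`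
is nonpositive. -/
theorem lyapunov_nonpositive
    (I : Set ℝ) (hI : I.OrdConnected)
    (v : ℝ → ℝ → ℝ)
    (hpos : ∀ ψ ∈ Set.Icc (-(π / 2)) (π / 2), ∀ t ∈ I, 0 < v ψ t)
    (hψreg : ∀ t ∈ I, ContDiffOn ℝ 2 (fun ψ => v ψ t) (Set.Icc (-(π / 2)) (π / 2)))
    (hpole : ∀ t ∈ I, dps v (-(π / 2)) t = 0 ∧ dps v (π / 2) t = 0)
    (htreg : ∀ ψ ∈ Set.Icc (-(π / 2)) (π / 2), ∀ t ∈ I,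
      DifferentiableAt ℝ (fun s => v ψ s) t)
    (hpde : ∀ ψ ∈ Set.Ioo (-(π / 2)) (π / 2), ∀ t ∈ I,
      dtime v ψ t =
        v ψ t * (dpsps v ψ t - Real.tan ψ * dps v ψ t)
          - (dps v ψ t) ^ 2 + 2 * (v ψ t) ^ 2)
    (hR : ∀ ψ ∈ Set.Icc (-(π / 2)) (π / 2), ∀ t ∈ I, 0 ≤ dtime v ψ t / v ψ t) :
    ∀ t ∈ I,
      (∫ ψ in (-(π / 2))..(π / 2), ((dps v ψ t) ^ 2 / v ψ t - 4 * v ψ t) * Real.cos ψ)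
        ≤ 0 :=
  lyapunov_nonpositive_general I v hpos hψreg hpde hR
end

section
/- Let t₀ < 0 and let I: (-∞, t₀] → ℝ be differentiable with 0 < I(t) ≤ 1 for all t ≤ t₀, I'(t) ≥ I(t)·(1 - I(t)²)/(-t) for all t ≤ t₀, and I(t₀) < 1. Then there exist constants C₁ > 0 and C₂ > 0 such that I(t) ≤ C₁/((-t) + C₂) for all t ≤ t₀. -/
open Real Set

/-!
Along the differential inequality the quantity `(I⁻² - 1) / t²` is nonincreasing in `t`, since its
derivative is `-2 (I' t + I (1 - I²)) / (I³ t³)` and both factors have a sign for `t < 0`, `I > 0`.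
Going back in time from `t₀` it therefore stays above `c = (I(t₀)⁻² - 1) / t₀² > 0`, so that
`I² (1 + c t²) ≤ 1`: this gives `I ≤ 1` and `I · (-t) ≤ c^{-1/2}`, hence `I · (-t + 1) ≤ c^{-1/2} + 1`.
-/

lemma hasDerivAt_inv_sq_sub_one_div_sq {I : ℝ → ℝ} {I' t : ℝ} (hI : HasDerivAt I I' t)
    (hIt : I t ≠ 0) (ht : t ≠ 0) :
    HasDerivAt (fun s => ((I s ^ 2)⁻¹ - 1) / s ^ 2)
      (-2 / (I t ^ 3 * t ^ 3) * (I' * t + I t * (1 - I t ^ 2))) t := by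
  refine ((((hI.pow 2).inv (pow_ne_zero 2 hIt)).sub_const 1).div (hasDerivAt_pow 2 t)
    (pow_ne_zero 2 ht)).congr_deriv ?_
  simp only [Pi.pow_apply, Pi.inv_apply, Nat.cast_ofNat, Nat.add_one_sub_one, pow_one]
  field_simp
  ring

lemma antitoneOn_inv_sq_sub_one_div_sq {I : ℝ → ℝ} {t₀ : ℝ} (ht₀ : t₀ < 0)
    (hdiff : ∀ t ≤ t₀, DifferentiableAt ℝ I t) (hpos : ∀ t ≤ t₀, 0 < I t)
    (hode : ∀ t ≤ t₀, deriv I t ≥ I t * (1 - I t ^ 2) / (-t)) :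
    AntitoneOn (fun t => ((I t ^ 2)⁻¹ - 1) / t ^ 2) (Iic t₀) := by
  have hderiv : ∀ t ≤ t₀, HasDerivAt (fun s => ((I s ^ 2)⁻¹ - 1) / s ^ 2)
      (-2 / (I t ^ 3 * t ^ 3) * (deriv I t * t + I t * (1 - I t ^ 2))) t := fun t ht =>
    hasDerivAt_inv_sq_sub_one_div_sq (hdiff t ht).hasDerivAt (hpos t ht).ne' (by linarith)
  refine antitoneOn_of_deriv_nonpos (convex_Iic t₀)
    (fun t ht => (hderiv t ht).continuousAt.continuousWithinAt) ?_ ?_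
  · rw [interior_Iic]
    exact fun t ht => (hderiv t ht.le).differentiableAt.differentiableWithinAt
  · rw [interior_Iic]
    intro t ht
    have htneg : t < 0 := ht.trans ht₀
    have hIt := hpos t ht.le
    have hode_t : deriv I t * t + I t * (1 - I t ^ 2) ≤ 0 := by
      have := hode t ht.le
      rw [ge_iff_le, div_le_iff₀ (neg_pos.mpr htneg)] at this
      linarith
    have hfactor : 0 ≤ -2 / (I t ^ 3 * t ^ 3) :=
      div_nonneg_of_nonpos (by norm_num)
        (mul_nonpos_of_nonneg_of_nonpos (by positivity) (Odd.pow_nonpos (by decide) htneg.le))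
    rw [(hderiv t ht.le).deriv]
    exact mul_nonpos_of_nonneg_of_nonpos hfactor hode_t

lemma mul_add_one_le_of_le_inv_sq_sub_one_div_sq {c x s : ℝ} (hc : 0 < c) (hx : 0 < x)
    (hs : 0 < s) (h : c ≤ ((x ^ 2)⁻¹ - 1) / s ^ 2) :
    x * (s + 1) ≤ (√c)⁻¹ + 1 := by
  have hsq : x ^ 2 * (c * s ^ 2 + 1) ≤ 1 := by
    rw [le_div_iff₀ (by positivity)] at h
    calc x ^ 2 * (c * s ^ 2 + 1) ≤ x ^ 2 * (x ^ 2)⁻¹ := by gcongr; linarith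
      _ = 1 := mul_inv_cancel₀ (by positivity)
  have hx1 : x ≤ 1 := by nlinarith [mul_nonneg (sq_nonneg x) (mul_nonneg hc.le (sq_nonneg s))]
  have hxs : x * s ≤ (√c)⁻¹ := by
    have : (x * s * √c) ^ 2 ≤ 1 := by rw [mul_pow, sq_sqrt hc.le]; nlinarith
    rw [← one_div, le_div_iff₀ (sqrt_pos.2 hc)]
    exact (pow_le_one_iff_of_nonneg (by positivity) two_ne_zero).mp this
  linarith

/-- Decay of Hamilton's isoperimetric ratio: if `0 < I ≤ 1`,
`I' ≥ I(1 - I²)/(-t)` on `(-∞, t₀]` with `t₀ < 0`, and `I(t₀) < 1`, then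
`I(t) ≤ C₁/((-t) + C₂)` for all `t ≤ t₀`. -/
theorem isoperimetric_ratio_decay
    (t₀ : ℝ) (ht₀ : t₀ < 0) (I : ℝ → ℝ)
    (hdiff : ∀ t ≤ t₀, DifferentiableAt ℝ I t)
    (hbound : ∀ t ≤ t₀, 0 < I t ∧ I t ≤ 1)
    (hode : ∀ t ≤ t₀, deriv I t ≥ I t * (1 - (I t) ^ 2) / (-t))
    (hlt : I t₀ < 1) :
    ∃ C₁ > (0 : ℝ), ∃ C₂ > (0 : ℝ), ∀ t ≤ t₀, I t ≤ C₁ / ((-t) + C₂) := by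
  have hpos : ∀ t ≤ t₀, 0 < I t := fun t ht => (hbound t ht).1
  set c := ((I t₀ ^ 2)⁻¹ - 1) / t₀ ^ 2
  have hc : 0 < c := by
    have : 1 < (I t₀ ^ 2)⁻¹ :=
      (one_lt_inv₀ (pow_pos (hpos t₀ le_rfl) 2)).mpr
        (pow_lt_one₀ (hpos t₀ le_rfl).le hlt two_ne_zero)
    exact div_pos (by linarith) (sq_pos_of_neg ht₀)
  refine ⟨(√c)⁻¹ + 1, add_pos (inv_pos.2 (sqrt_pos.2 hc)) one_pos, 1, one_pos, fun t ht => ?_⟩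
  rw [le_div_iff₀ (by linarith)]
  refine mul_add_one_le_of_le_inv_sq_sub_one_div_sq hc (hpos t ht) (by linarith) ?_
  rw [neg_sq]
  exact antitoneOn_inv_sq_sub_one_div_sq ht₀ hdiff hpos hode ht (mem_Iic.2 le_rfl) ht
end

section
/- Let t₀ ≤ -1, let c > 0, C_H > 0, C₀ > 0, x₀ ∈ ℝ, and let α ∈ (0,1). Set b := √(c(1-α)/2). Let w: ℝ × (-∞, t₀] → ℝ satisfy w(x,t) ≥ c for all (x,t), and let R: ℝ × (-∞, t₀] → ℝ be nonnegative. Define for each t the distance d_t(x₀, x) := |∫_{x₀}^{x} w(s,t)^{-1/2} ds|. Assume: (a) the Harnack-type inequality R(x,t) ≤ C_H · R(x₀, t/2) · exp(2·d_t(x₀,x)²/(-t)) holds for all x ∈ ℝ and all t ≤ t₀; and (b) R(x₀, t) ≤ C₀/(-t) for all t ≤ t₀. Then for all t ≤ 2t₀ and all x with |x - x₀| ≤ b·√((-t)·log(-t)), one has R(x,t) ≤ 2·C_H·C₀/(-t)^α. -/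
open Real Set

/-!
On `S_τ` the lower bound `w ≥ c` gives `d_t(x₀, x) ≤ |x - x₀| / √c ≤ √((1-α)/2 · τ log τ)`, so the
Harnack factor `exp (2 d_t² / τ)` is at most `τ ^ (1-α)`. Combined with `R(x₀, t/2) ≤ 2 C₀ / τ`
this gives `R(x, t) ≤ 2 C_H C₀ τ^(-α)`.
-/

lemma abs_intervalIntegral_inv_sqrt_le {f : ℝ → ℝ} {a b c : ℝ} (hc : 0 < c)
    (hf : ∀ s ∈ uIoc a b, c ≤ f s) :
    |∫ s in a..b, (√(f s))⁻¹| ≤ |b - a| / √c := by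
  have hbound : ∀ s ∈ uIoc a b, ‖(√(f s))⁻¹‖ ≤ (√c)⁻¹ := fun s hs => by
    rw [norm_inv, Real.norm_of_nonneg (Real.sqrt_nonneg _)]
    exact inv_anti₀ (Real.sqrt_pos.mpr hc) (Real.sqrt_le_sqrt (hf s hs))
  simpa [div_eq_inv_mul] using intervalIntegral.norm_integral_le_of_norm_le_const hbound

lemma sq_le_of_le_div_sqrt {D r c β L : ℝ} (hc : 0 < c) (hβ : 0 ≤ β) (hL : 0 ≤ L)
    (hD₀ : 0 ≤ D) (hD : D ≤ r / √c) (hr : r ≤ √(c * β / 2) * √L) :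
    D ^ 2 ≤ β / 2 * L := by
  have hsqrt : √(c * β / 2) * √L / √c = √(β / 2 * L) := by
    rw [mul_div_assoc c β, Real.sqrt_mul hc.le, mul_assoc, ← Real.sqrt_mul (by positivity),
      mul_div_cancel_left₀ _ (Real.sqrt_pos.mpr hc).ne']
  have hD' : D ≤ √(β / 2 * L) :=
    hsqrt ▸ hD.trans (div_le_div_of_nonneg_right hr (Real.sqrt_nonneg c))
  exact (Real.le_sqrt hD₀ (by positivity)).mp hD'

lemma exp_two_mul_sq_div_le_rpow {τ D β : ℝ} (hτ : 0 < τ) (hD : D ^ 2 ≤ β / 2 * (τ * log τ)) :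
    exp (2 * D ^ 2 / τ) ≤ τ ^ β := by
  rw [Real.rpow_def_of_pos hτ, Real.exp_le_exp, div_le_iff₀ hτ]
  linarith

lemma div_half_mul_rpow_one_sub {τ : ℝ} (hτ : 0 < τ) (a α : ℝ) :
    a / (τ / 2) * τ ^ (1 - α) = 2 * a / τ ^ α := by
  rw [Real.rpow_sub hτ, Real.rpow_one]
  field_simp [(Real.rpow_pos_of_pos hτ α).ne']

theorem curvature_decay_on_S_tau_general
    (t₀ : ℝ) (ht₀ : t₀ ≤ -1)
    (c C_H C₀ x₀ α : ℝ)
    (hc : 0 < c) (hCH : 0 < C_H) (hα : α ∈ Set.Ioo (0 : ℝ) 1)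
    (w R : ℝ → ℝ → ℝ)
    (hw : ∀ x : ℝ, ∀ t ≤ t₀, c ≤ w x t)
    (hR : ∀ x : ℝ, ∀ t ≤ t₀, 0 ≤ R x t)
    -- (a) the Harnack-type inequality, with `d_t(x₀,x) = |∫_{x₀}^x w(s,t)^{-1/2} ds|`
    (hHarnack : ∀ x : ℝ, ∀ t ≤ t₀,
      R x t ≤ C_H * R x₀ (t / 2) *
        Real.exp (2 * |∫ s in x₀..x, (Real.sqrt (w s t))⁻¹| ^ 2 / (-t)))
    -- (b) pointwise curvature decay at `x₀`
    (hdecay : ∀ t ≤ t₀, R x₀ t ≤ C₀ / (-t)) :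
    ∀ t ≤ 2 * t₀, ∀ x : ℝ,
      |x - x₀| ≤ Real.sqrt (c * (1 - α) / 2) * Real.sqrt ((-t) * Real.log (-t)) →
        R x t ≤ 2 * C_H * C₀ / (-t) ^ α := by
  intro t ht x hx
  have ht' : t ≤ t₀ := by linarith
  have hhalf : t / 2 ≤ t₀ := by linarith
  have hτ : 0 < -t := by linarith
  have hlog : 0 ≤ log (-t) := Real.log_nonneg (by linarith)
  have hdist : |∫ s in x₀..x, (√(w s t))⁻¹| ^ 2 ≤ (1 - α) / 2 * (-t * log (-t)) :=
    sq_le_of_le_div_sqrt hc (by linarith [hα.2]) (by positivity) (abs_nonneg _)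
      (abs_intervalIntegral_inv_sqrt_le hc fun s _ => hw s t ht') hx
  have hCR : 0 ≤ C_H * R x₀ (t / 2) := mul_nonneg hCH.le (hR x₀ _ hhalf)
  calc R x t ≤ C_H * R x₀ (t / 2) * exp (2 * |∫ s in x₀..x, (√(w s t))⁻¹| ^ 2 / (-t)) :=
        hHarnack x t ht'
    _ ≤ C_H * R x₀ (t / 2) * (-t) ^ (1 - α) := by
        gcongr
        exact exp_two_mul_sq_div_le_rpow hτ hdist
    _ ≤ C_H * (C₀ / (-t / 2)) * (-t) ^ (1 - α) := by
        gcongr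
        simpa [neg_div] using hdecay (t / 2) hhalf
    _ = 2 * C_H * C₀ / (-t) ^ α := by
        rw [mul_assoc, div_half_mul_rpow_one_sub hτ]
        ring

/-- Curvature decay on the expanding regions `S_τ = {|x - x₀| ≤ b√(τ log τ)}`,
`τ = -t`, `b = √(c(1-α)/2)`: from Hamilton's Harnack-type inequality and the
pointwise decay `R(x₀,t) ≤ C₀/(-t)`, one gets `R ≤ 2·C_H·C₀/(-t)^α` on `S_τ`. -/
theorem curvature_decay_on_S_tau
    (t₀ : ℝ) (ht₀ : t₀ ≤ -1)
    (c C_H C₀ x₀ α : ℝ)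
    (hc : 0 < c) (hCH : 0 < C_H) (hC₀ : 0 < C₀) (hα : α ∈ Set.Ioo (0 : ℝ) 1)
    (w R : ℝ → ℝ → ℝ)
    (hw : ∀ x : ℝ, ∀ t ≤ t₀, c ≤ w x t)
    (hR : ∀ x : ℝ, ∀ t ≤ t₀, 0 ≤ R x t)
    -- (a) the Harnack-type inequality, with `d_t(x₀,x) = |∫_{x₀}^x w(s,t)^{-1/2} ds|`
    (hHarnack : ∀ x : ℝ, ∀ t ≤ t₀,
      R x t ≤ C_H * R x₀ (t / 2) *
        Real.exp (2 * |∫ s in x₀..x, (Real.sqrt (w s t))⁻¹| ^ 2 / (-t)))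
    -- (b) pointwise curvature decay at `x₀`
    (hdecay : ∀ t ≤ t₀, R x₀ t ≤ C₀ / (-t)) :
    ∀ t ≤ 2 * t₀, ∀ x : ℝ,
      |x - x₀| ≤ Real.sqrt (c * (1 - α) / 2) * Real.sqrt ((-t) * Real.log (-t)) →
        R x t ≤ 2 * C_H * C₀ / (-t) ^ α :=
  curvature_decay_on_S_tau_general t₀ ht₀ c C_H C₀ x₀ α hc hCH hα w R hw hR hHarnack hdecay
end

section
/- Let x₀ ∈ ℝ, b > 0, C ≥ 1, and t₀ ≤ -e. Define ρ(t) := b·√((-t)·(log(-t) + 2·log C)/2) for t ≤ t₀, and let D := {(x,t) : t ≤ t₀, |x - x₀| ≤ ρ(t)}. Let a: D → ℝ satisfy 0 < a(x,t) ≤ b²/4 on D, and let F: D → ℝ be continuous, twice continuously differentiable in x and continuously differentiable in t on the interior of D, with 0 ≤ F(x,t) ≤ C on D and ∂_t F ≤ a·∂_xx F on the interior of D. Assume moreover that for every ε > 0 there exists t_ε ≤ t₀ such that F(x,t) ≤ ε whenever (x,t) ∈ D and t ≤ t_ε. Then F(x₀, t) ≤ (-t)^{-1/2} for all t ≤ t₀.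 -/
open Real Set

/-- Second spatial derivative `∂_xx F`. -/
noncomputable def dXX (F : ℝ → ℝ → ℝ) (x t : ℝ) : ℝ := deriv (deriv (fun s => F s t)) x

/-- Time derivative `∂_t F`. -/
noncomputable def dT (F : ℝ → ℝ → ℝ) (x t : ℝ) : ℝ := deriv (fun s => F x s) t

/-!
The backward heat kernel `φ(x,t) = exp((x - x₀)²/(b²(-t))) / √(-t)` solves `φ_t = (b²/4) φ_xx`
with `φ_xx ≥ 0`, so for `a ≤ b²/4` it is a supersolution of `u_t = a u_xx`; it equals `C ≥ F` on
the lateral boundary `|x - x₀| = ρ(t)`. Given `ε > 0`, pick `T` with `F ≤ ε` before time `T`.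
On the slab `T ≤ s ≤ t` the function `φ + ε + ε (s - T)/(t - T)` is a strict supersolution lying
above `F` on the parabolic boundary, so the weak maximum principle (at an interior maximum of the
difference, `∂_xx ≤ 0` and the left `∂_t ≥ 0`) gives `F ≤ φ + 2ε` at time `t`. Hence `F ≤ φ` for
`t < t₀`, by continuity also at `t₀`, and `φ(x₀, t) = 1/√(-t)`.
-/

open Filter Topology

theorem IsLocalMax.deriv_deriv_nonpos {f : ℝ → ℝ} {x : ℝ} (h : IsLocalMax f x)
    (hc : ContinuousAt f x) : deriv (deriv f) x ≤ 0 := by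
  by_contra! hpos
  -- the second-derivative test would make `x` a local minimum too, so `f` is locally constant
  have hconst : f =ᶠ[𝓝 x] fun _ => f x := by
    filter_upwards [h, isLocalMin_of_deriv_deriv_pos hpos h.deriv_eq_zero hc] with y hmax hmin
    exact le_antisymm hmax hmin
  rw [hconst.deriv.deriv_eq] at hpos
  simp at hpos

theorem HasDerivAt.nonneg_of_eventually_le_left {f : ℝ → ℝ} {f' t : ℝ} (hf : HasDerivAt f f' t)
    (h : ∀ᶠ s in 𝓝[<] t, f s ≤ f t) : 0 ≤ f' := by
  refine ge_of_tendsto (hasDerivAt_iff_tendsto_slope_left_right.1 hf).1 ?_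
  filter_upwards [h, self_mem_nhdsWithin] with s hs hst
  rw [slope_comm]
  exact (slope_nonneg_iff_of_le (le_of_lt hst)).2 hs

theorem not_parabolic_max_of_strict_supersolution {a x t : ℝ} {F ψ : ℝ → ℝ → ℝ} (ha : 0 ≤ a)
    (hF₂ : ContDiffAt ℝ 2 (fun y => F y t) x) (hF₁ : DifferentiableAt ℝ (fun s => F x s) t)
    (hψ₂ : ContDiffAt ℝ 2 (fun y => ψ y t) x) (hψ₁ : DifferentiableAt ℝ (fun s => ψ x s) t)
    (hF : dT F x t ≤ a * dXX F x t) (hψ : a * dXX ψ x t < dT ψ x t)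
    (hmax_x : IsLocalMax (fun y => F y t - ψ y t) x)
    (hmax_t : ∀ᶠ s in 𝓝[<] t, F x s - ψ x s ≤ F x t - ψ x t) : False := by
  have hxx : dXX F x t ≤ dXX ψ x t := by
    have h := hmax_x.deriv_deriv_nonpos (hF₂.continuousAt.sub hψ₂.continuousAt)
    have hsub : deriv (deriv fun y => F y t - ψ y t) x = dXX F x t - dXX ψ x t := by
      simpa [dXX, iteratedDeriv_eq_iterate] using iteratedDeriv_fun_sub hF₂ hψ₂
    linarith
  have htt : dT ψ x t ≤ dT F x t := by
    have h := (hF₁.hasDerivAt.sub hψ₁.hasDerivAt).nonneg_of_eventually_le_left hmax_t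
    rw [dT, dT]
    linarith
  linarith [mul_le_mul_of_nonneg_left hxx ha]

theorem dXX_add_right (ψ : ℝ → ℝ → ℝ) (g : ℝ → ℝ) (x t : ℝ) :
    dXX (fun y s => ψ y s + g s) x t = dXX ψ x t := by
  simp only [dXX, deriv_add_const']

theorem dT_add_right {ψ : ℝ → ℝ → ℝ} {g : ℝ → ℝ} {x t : ℝ}
    (hψ : DifferentiableAt ℝ (fun s => ψ x s) t) (hg : DifferentiableAt ℝ g t) :
    dT (fun y s => ψ y s + g s) x t = dT ψ x t + deriv g t :=
  deriv_add hψ hg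

def parabolicRegion (x₀ t₀ : ℝ) (ρ : ℝ → ℝ) : Set (ℝ × ℝ) :=
  {p | p.2 ≤ t₀ ∧ |p.1 - x₀| ≤ ρ p.2}

def parabolicSlab (x₀ : ℝ) (ρ : ℝ → ℝ) (T t₁ : ℝ) : Set (ℝ × ℝ) :=
  {p | p.2 ∈ Icc T t₁ ∧ |p.1 - x₀| ≤ ρ p.2}

def parabolicInterior (x₀ : ℝ) (ρ : ℝ → ℝ) (T t₁ : ℝ) : Set (ℝ × ℝ) :=
  {p | p.2 ∈ Ioc T t₁ ∧ |p.1 - x₀| < ρ p.2}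

section Slab

variable {x₀ T t₁ : ℝ} {ρ : ℝ → ℝ}

theorem isCompact_parabolicSlab (hρ : Continuous ρ) : IsCompact (parabolicSlab x₀ ρ T t₁) := by
  obtain ⟨M, hM⟩ := isCompact_Icc.exists_bound_of_continuousOn (s := Icc T t₁) hρ.continuousOn
  refine ((isCompact_Icc (a := x₀ - M) (b := x₀ + M)).prod
    (isCompact_Icc (a := T) (b := t₁))).of_isClosed_subset ?_ fun p hp => ?_
  · exact (isClosed_Icc.preimage continuous_snd).inter
      (isClosed_le (by fun_prop) (hρ.comp continuous_snd))
  · have hbound := abs_le.1 (hp.2.trans ((le_abs_self _).trans (hM p.2 hp.1)))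
    exact ⟨⟨by linarith [hbound.1], by linarith [hbound.2]⟩, hp.1⟩

theorem nonpos_on_parabolicSlab {u : ℝ → ℝ → ℝ} (hρ : Continuous ρ)
    (hu : ContinuousOn (fun p : ℝ × ℝ => u p.1 p.2) (parabolicSlab x₀ ρ T t₁))
    (hbottom : ∀ x, |x - x₀| ≤ ρ T → u x T ≤ 0)
    (hlateral : ∀ p ∈ parabolicSlab x₀ ρ T t₁, |p.1 - x₀| = ρ p.2 → u p.1 p.2 ≤ 0)
    (hinterior : ∀ p ∈ parabolicInterior x₀ ρ T t₁, IsLocalMax (fun y => u y p.2) p.1 →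
      (∀ᶠ s in 𝓝[<] p.2, u p.1 s ≤ u p.1 p.2) → u p.1 p.2 ≤ 0) :
    ∀ q ∈ parabolicSlab x₀ ρ T t₁, u q.1 q.2 ≤ 0 := by
  intro q hq
  obtain ⟨p, hp, hmax⟩ := (isCompact_parabolicSlab hρ).exists_isMaxOn ⟨q, hq⟩ hu
  refine (hmax hq).trans ?_
  obtain ⟨⟨hTp, hpt₁⟩, hpρ⟩ := hp
  rcases hpρ.eq_or_lt with hlat | hin
  · exact hlateral p ⟨⟨hTp, hpt₁⟩, hpρ⟩ hlat
  rcases hTp.eq_or_lt with rfl | hTp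
  · exact hbottom p.1 hpρ
  refine hinterior p ⟨⟨hTp, hpt₁⟩, hin⟩ ?_ ?_
  · have hnear : ∀ᶠ y in 𝓝 p.1, |y - x₀| < ρ p.2 :=
      (continuous_abs.comp (continuous_sub_right x₀)).continuousAt.eventually_lt
        continuousAt_const hin
    filter_upwards [hnear] with y hy
    exact hmax (show (y, p.2) ∈ parabolicSlab x₀ ρ T t₁ from ⟨⟨hTp.le, hpt₁⟩, hy.le⟩)
  · have hnear : ∀ᶠ s in 𝓝 p.2, T < s ∧ |p.1 - x₀| < ρ s :=
      (eventually_gt_nhds hTp).and (continuousAt_const.eventually_lt hρ.continuousAt hin)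
    filter_upwards [nhdsWithin_le_nhds hnear, self_mem_nhdsWithin] with s hs hsp
    exact hmax (show (p.1, s) ∈ parabolicSlab x₀ ρ T t₁ from
      ⟨⟨hs.1.le, (le_of_lt hsp).trans hpt₁⟩, hs.2.le⟩)

theorem le_on_parabolicSlab_of_strict_supersolution {a F ψ : ℝ → ℝ → ℝ} (hρ : Continuous ρ)
    (hcont : ContinuousOn (fun p : ℝ × ℝ => F p.1 p.2 - ψ p.1 p.2) (parabolicSlab x₀ ρ T t₁))
    (hbottom : ∀ x, |x - x₀| ≤ ρ T → F x T ≤ ψ x T)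
    (hlateral : ∀ p ∈ parabolicSlab x₀ ρ T t₁, |p.1 - x₀| = ρ p.2 → F p.1 p.2 ≤ ψ p.1 p.2)
    (ha : ∀ p ∈ parabolicInterior x₀ ρ T t₁, 0 ≤ a p.1 p.2)
    (hF₂ : ∀ p ∈ parabolicInterior x₀ ρ T t₁, ContDiffAt ℝ 2 (fun y => F y p.2) p.1)
    (hF₁ : ∀ p ∈ parabolicInterior x₀ ρ T t₁, DifferentiableAt ℝ (fun s => F p.1 s) p.2)
    (hψ₂ : ∀ p ∈ parabolicInterior x₀ ρ T t₁, ContDiffAt ℝ 2 (fun y => ψ y p.2) p.1)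
    (hψ₁ : ∀ p ∈ parabolicInterior x₀ ρ T t₁, DifferentiableAt ℝ (fun s => ψ p.1 s) p.2)
    (hsub : ∀ p ∈ parabolicInterior x₀ ρ T t₁, dT F p.1 p.2 ≤ a p.1 p.2 * dXX F p.1 p.2)
    (hsuper : ∀ p ∈ parabolicInterior x₀ ρ T t₁, a p.1 p.2 * dXX ψ p.1 p.2 < dT ψ p.1 p.2) :
    ∀ p ∈ parabolicSlab x₀ ρ T t₁, F p.1 p.2 ≤ ψ p.1 p.2 := by
  intro p hp
  refine sub_nonpos.1 (nonpos_on_parabolicSlab (u := fun x t => F x t - ψ x t) hρ hcont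
    (fun x hx => sub_nonpos.2 (hbottom x hx)) (fun q hq hlat => sub_nonpos.2 (hlateral q hq hlat))
    (fun q hq hmax_x hmax_t => ?_) p hp)
  exact (not_parabolic_max_of_strict_supersolution (ha q hq) (hF₂ q hq) (hF₁ q hq) (hψ₂ q hq)
    (hψ₁ q hq) (hsub q hq) (hsuper q hq) hmax_x hmax_t).elim

theorem parabolicInterior_subset_interior {t₀ : ℝ} (hρ : Continuous ρ) (ht₁ : t₁ < t₀) :
    parabolicInterior x₀ ρ T t₁ ⊆ interior (parabolicRegion x₀ t₀ ρ) := by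
  have hopen : IsOpen {p : ℝ × ℝ | p.2 < t₀ ∧ |p.1 - x₀| < ρ p.2} :=
    (isOpen_lt continuous_snd continuous_const).inter
      (isOpen_lt (by fun_prop) (hρ.comp continuous_snd))
  refine fun p hp => interior_maximal ?_ hopen ⟨hp.1.2.trans_lt ht₁, hp.2⟩
  exact fun q hq => ⟨hq.1.le, hq.2.le⟩

end Slab

theorem le_of_subsolution_of_supersolution {x₀ t₀ : ℝ} {ρ : ℝ → ℝ} {a F ψ : ℝ → ℝ → ℝ}
    (hρ : Continuous ρ)
    (hF : ContinuousOn (fun p : ℝ × ℝ => F p.1 p.2) (parabolicRegion x₀ t₀ ρ))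
    (hψ : ContinuousOn (fun p : ℝ × ℝ => ψ p.1 p.2) (parabolicRegion x₀ t₀ ρ))
    (hψ_nonneg : ∀ p ∈ parabolicRegion x₀ t₀ ρ, 0 ≤ ψ p.1 p.2)
    (hlateral : ∀ p ∈ parabolicRegion x₀ t₀ ρ, |p.1 - x₀| = ρ p.2 → F p.1 p.2 ≤ ψ p.1 p.2)
    (ha : ∀ p ∈ interior (parabolicRegion x₀ t₀ ρ), 0 ≤ a p.1 p.2)
    (hFreg : ∀ p ∈ interior (parabolicRegion x₀ t₀ ρ),
      ContDiffAt ℝ 2 (fun y => F y p.2) p.1 ∧ DifferentiableAt ℝ (fun s => F p.1 s) p.2)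
    (hψreg : ∀ p ∈ interior (parabolicRegion x₀ t₀ ρ),
      ContDiffAt ℝ 2 (fun y => ψ y p.2) p.1 ∧ DifferentiableAt ℝ (fun s => ψ p.1 s) p.2)
    (hsub : ∀ p ∈ interior (parabolicRegion x₀ t₀ ρ),
      dT F p.1 p.2 ≤ a p.1 p.2 * dXX F p.1 p.2)
    (hsuper : ∀ p ∈ interior (parabolicRegion x₀ t₀ ρ),
      a p.1 p.2 * dXX ψ p.1 p.2 ≤ dT ψ p.1 p.2)
    (hvanish : ∀ ε > 0, ∃ T, ∀ p ∈ parabolicRegion x₀ t₀ ρ, p.2 ≤ T → F p.1 p.2 ≤ ε) :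
    ∀ p ∈ parabolicRegion x₀ t₀ ρ, p.2 < t₀ → F p.1 p.2 ≤ ψ p.1 p.2 := by
  rintro ⟨x, t⟩ hp ht
  refine le_of_forall_pos_le_add fun ε₂ hε₂ => ?_
  obtain ⟨ε, hε, rfl⟩ : ∃ ε > 0, ε₂ = ε + ε := ⟨ε₂ / 2, half_pos hε₂, (add_halves ε₂).symm⟩
  obtain ⟨T, hT⟩ := hvanish ε hε
  rcases le_or_gt t T with htT | hTt
  · linarith [hT _ hp htT, hψ_nonneg _ hp]
  -- on the slab `[T, t]`, `+ δ (s - T)` makes `ψ` a strict supersolution and `+ ε` beats `F ≤ ε`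
  set δ := ε / (t - T)
  have hδ : 0 < δ := div_pos hε (sub_pos.2 hTt)
  have hg : ∀ s, HasDerivAt (fun s => δ * (s - T) + ε) δ s := fun s => by
    simpa using (((hasDerivAt_id s).sub_const T).const_mul δ).add_const ε
  have hslab : parabolicSlab x₀ ρ T t ⊆ parabolicRegion x₀ t₀ ρ :=
    fun q hq => ⟨hq.1.2.trans ht.le, hq.2⟩
  have hint := parabolicInterior_subset_interior (x₀ := x₀) (T := T) hρ ht
  have hbottom : ∀ y, |y - x₀| ≤ ρ T → F y T ≤ ψ y T + (δ * (T - T) + ε) := fun y hy => by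
    have hyT : (y, T) ∈ parabolicRegion x₀ t₀ ρ := ⟨hTt.le.trans ht.le, hy⟩
    linarith [hT _ hyT le_rfl, hψ_nonneg _ hyT]
  have hlateral' : ∀ q ∈ parabolicSlab x₀ ρ T t, |q.1 - x₀| = ρ q.2 →
      F q.1 q.2 ≤ ψ q.1 q.2 + (δ * (q.2 - T) + ε) := fun q hq hlat => by
    linarith [hlateral q (hslab hq) hlat, mul_nonneg hδ.le (sub_nonneg.2 hq.1.1)]
  have hstrict : ∀ q ∈ parabolicInterior x₀ ρ T t,
      a q.1 q.2 * dXX (fun y s => ψ y s + (δ * (s - T) + ε)) q.1 q.2 <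
        dT (fun y s => ψ y s + (δ * (s - T) + ε)) q.1 q.2 := fun q hq => by
    rw [dXX_add_right, dT_add_right (hψreg q (hint hq)).2 (hg q.2).differentiableAt,
      (hg q.2).deriv]
    linarith [hsuper q (hint hq)]
  have hcomp := le_on_parabolicSlab_of_strict_supersolution hρ
    ((hF.mono hslab).sub ((hψ.mono hslab).add (by fun_prop))) hbottom hlateral'
    (fun q hq => ha q (hint hq)) (fun q hq => (hFreg q (hint hq)).1)
    (fun q hq => (hFreg q (hint hq)).2) (fun q hq => (hψreg q (hint hq)).1.add contDiffAt_const)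
    (fun q hq => (hψreg q (hint hq)).2.add (hg q.2).differentiableAt)
    (fun q hq => hsub q (hint hq)) hstrict (x, t) ⟨⟨hTt.le, le_rfl⟩, hp.2⟩
  have hδt : δ * (t - T) = ε := div_mul_cancel₀ _ (sub_pos.2 hTt).ne'
  simp only [hδt] at hcomp
  linarith

noncomputable def heatBarrier (x₀ b x t : ℝ) : ℝ :=
  exp ((x - x₀) ^ 2 / (b ^ 2 * -t)) / √(-t)

noncomputable def kernelRadius (b C t : ℝ) : ℝ :=
  b * √((-t) * (log (-t) + 2 * log C) / 2)

section Barrier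

variable {x₀ b : ℝ}

theorem heatBarrier_self (x₀ b t : ℝ) : heatBarrier x₀ b x₀ t = 1 / √(-t) := by
  simp [heatBarrier]

theorem heatBarrier_nonneg (x₀ b x t : ℝ) : 0 ≤ heatBarrier x₀ b x t := by
  unfold heatBarrier
  positivity

theorem continuousOn_heatBarrier (hb : b ≠ 0) :
    ContinuousOn (fun p : ℝ × ℝ => heatBarrier x₀ b p.1 p.2) {p | p.2 < 0} := by
  intro p (hp : p.2 < 0)
  have hden : b ^ 2 * -p.2 ≠ 0 := mul_ne_zero (pow_ne_zero 2 hb) (neg_pos.2 hp).ne'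
  have hsqrt : √(-p.2) ≠ 0 := (sqrt_pos.2 (neg_pos.2 hp)).ne'
  unfold heatBarrier
  exact ContinuousAt.continuousWithinAt (by fun_prop (disch := assumption))

theorem contDiff_heatBarrier_x (x₀ b t : ℝ) : ContDiff ℝ 2 fun y => heatBarrier x₀ b y t := by
  unfold heatBarrier
  fun_prop

theorem hasDerivAt_heatBarrier_x (x₀ b x t : ℝ) :
    HasDerivAt (fun y => heatBarrier x₀ b y t)
      (heatBarrier x₀ b x t * (2 * (x - x₀) / (b ^ 2 * -t))) x := by
  have h := ((((hasDerivAt_id x).sub_const x₀).pow 2).div_const (b ^ 2 * -t)).exp.div_const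
    (√(-t))
  refine h.congr_deriv ?_
  simp only [heatBarrier, id, Pi.pow_apply]
  ring

theorem dXX_heatBarrier (x₀ b x t : ℝ) :
    dXX (heatBarrier x₀ b) x t =
      heatBarrier x₀ b x t * ((2 * (x - x₀) / (b ^ 2 * -t)) ^ 2 + 2 / (b ^ 2 * -t)) := by
  have hderiv : deriv (fun y => heatBarrier x₀ b y t) =
      fun y => heatBarrier x₀ b y t * (2 * (y - x₀) / (b ^ 2 * -t)) :=
    funext fun y => (hasDerivAt_heatBarrier_x x₀ b y t).deriv
  have hlin : HasDerivAt (fun y => 2 * (y - x₀) / (b ^ 2 * -t)) (2 / (b ^ 2 * -t)) x := by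
    simpa only [id, mul_one] using
      (((hasDerivAt_id x).sub_const x₀).const_mul 2).div_const (b ^ 2 * -t)
  rw [dXX, hderiv, ((hasDerivAt_heatBarrier_x x₀ b x t).fun_mul hlin).deriv]
  ring

theorem dXX_heatBarrier_nonneg (x₀ b x : ℝ) {t : ℝ} (ht : t ≤ 0) :
    0 ≤ dXX (heatBarrier x₀ b) x t := by
  have : 0 ≤ -t := neg_nonneg.2 ht
  rw [dXX_heatBarrier]
  exact mul_nonneg (heatBarrier_nonneg x₀ b x t) (by positivity)

theorem hasDerivAt_heatBarrier_t (hb : b ≠ 0) (x : ℝ) {t : ℝ} (ht : t < 0) :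
    HasDerivAt (fun s => heatBarrier x₀ b x s) (b ^ 2 / 4 * dXX (heatBarrier x₀ b) x t) t := by
  have hnt : 0 < -t := neg_pos.2 ht
  have hexponent : HasDerivAt (fun s => (x - x₀) ^ 2 / (b ^ 2 * -s))
      ((x - x₀) ^ 2 / (b ^ 2 * t ^ 2)) t := by
    have h := (((hasDerivAt_neg t).const_mul (b ^ 2)).fun_inv (by simp [hb, ht.ne])).const_mul
      ((x - x₀) ^ 2)
    simp only [← div_eq_mul_inv] at h
    refine h.congr_deriv ?_
    field_simp
  have hsqrt : HasDerivAt (fun s => √(-s)) (-1 / (2 * √(-t))) t := by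
    simpa using (hasDerivAt_id t).neg.sqrt hnt.ne'
  refine (hexponent.exp.fun_div hsqrt (sqrt_pos.2 hnt).ne').congr_deriv ?_
  have hsq : √(-t) ^ 2 = -t := sq_sqrt hnt.le
  rw [dXX_heatBarrier, heatBarrier]
  set E := exp ((x - x₀) ^ 2 / (b ^ 2 * -t))
  set r := √(-t)
  rw [show t = -r ^ 2 by rw [hsq]; ring]
  field_simp
  ring

theorem dT_heatBarrier (hb : b ≠ 0) (x : ℝ) {t : ℝ} (ht : t < 0) :
    dT (heatBarrier x₀ b) x t = b ^ 2 / 4 * dXX (heatBarrier x₀ b) x t :=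
  (hasDerivAt_heatBarrier_t hb x ht).deriv

theorem heatBarrier_supersolution (hb : b ≠ 0) {a x t : ℝ} (ha : a ≤ b ^ 2 / 4) (ht : t < 0) :
    a * dXX (heatBarrier x₀ b) x t ≤ dT (heatBarrier x₀ b) x t := by
  rw [dT_heatBarrier hb x ht]
  exact mul_le_mul_of_nonneg_right ha (dXX_heatBarrier_nonneg x₀ b x ht.le)

theorem heatBarrier_eq_of_abs_eq_kernelRadius {C t x : ℝ} (hb : 0 < b) (hC : 1 ≤ C)
    (ht : t ≤ -1) (hx : |x - x₀| = kernelRadius b C t) : heatBarrier x₀ b x t = C := by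
  have hnt : 0 < -t := by linarith
  have hlog : 0 ≤ log (-t) + 2 * log C := by
    have := log_nonneg (show (1 : ℝ) ≤ -t by linarith)
    have := log_nonneg hC
    linarith
  have hsq : (x - x₀) ^ 2 = b ^ 2 * ((-t) * (log (-t) + 2 * log C) / 2) := by
    rw [← sq_abs, hx, kernelRadius, mul_pow, sq_sqrt (by positivity)]
  have hexponent : (x - x₀) ^ 2 / (b ^ 2 * -t) = log (-t) / 2 + log C := by
    rw [hsq]
    field_simp [show t ≠ 0 by linarith]
  rw [heatBarrier, hexponent, exp_add, exp_half, exp_log hnt, exp_log (by linarith)]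
  field_simp

end Barrier

theorem continuous_kernelRadius (b C : ℝ) : Continuous (kernelRadius b C) := by
  have h : Continuous fun t : ℝ => (-t) * log (-t) := continuous_mul_log.comp continuous_neg
  show Continuous fun t => b * √((-t) * (log (-t) + 2 * log C) / 2)
  simp only [mul_add]
  exact continuous_const.mul ((h.add (by fun_prop)).div_const 2).sqrt

/-- Comparison with the backward heat kernel on the regions
`D = {(x,t) : t ≤ t₀, |x - x₀| ≤ ρ(t)}`, `ρ(t) = b√((-t)(log(-t) + 2 log C)/2)`:
a bounded nonnegative subsolution of `F_t ≤ a·F_xx` with `0 < a ≤ b²/4` that tends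
to `0` uniformly on `D` as `t → -∞` satisfies `F(x₀,t) ≤ 1/√(-t)`. -/
theorem heat_kernel_comparison
    (x₀ b C t₀ : ℝ) (hb : 0 < b) (hC : 1 ≤ C) (ht₀ : t₀ ≤ -Real.exp 1)
    (ρ : ℝ → ℝ)
    (hρ : ∀ t : ℝ, ρ t = b * Real.sqrt ((-t) * (Real.log (-t) + 2 * Real.log C) / 2))
    (D : Set (ℝ × ℝ))
    (hD : D = {p : ℝ × ℝ | p.2 ≤ t₀ ∧ |p.1 - x₀| ≤ ρ p.2})
    (a F : ℝ → ℝ → ℝ)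
    (ha : ∀ p ∈ D, 0 < a p.1 p.2 ∧ a p.1 p.2 ≤ b ^ 2 / 4)
    (hFcont : ContinuousOn (fun p : ℝ × ℝ => F p.1 p.2) D)
    (hFreg : ∀ p ∈ interior D,
      ContDiffAt ℝ 2 (fun x => F x p.2) p.1 ∧ ContDiffAt ℝ 1 (fun t => F p.1 t) p.2)
    (hFbd : ∀ p ∈ D, 0 ≤ F p.1 p.2 ∧ F p.1 p.2 ≤ C)
    (hsub : ∀ p ∈ interior D, dT F p.1 p.2 ≤ a p.1 p.2 * dXX F p.1 p.2)
    (hsmall : ∀ ε > (0 : ℝ), ∃ tε ≤ t₀, ∀ p ∈ D, p.2 ≤ tε → F p.1 p.2 ≤ ε) :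
    ∀ t ≤ t₀, F x₀ t ≤ 1 / Real.sqrt (-t) := by
  obtain rfl : ρ = kernelRadius b C := funext hρ
  obtain rfl : D = parabolicRegion x₀ t₀ (kernelRadius b C) := hD
  have ht₀_le : t₀ ≤ -1 := ht₀.trans (by linarith [add_one_le_exp (1 : ℝ)])
  have hneg : ∀ p ∈ parabolicRegion x₀ t₀ (kernelRadius b C), p.2 < 0 :=
    fun p hp => by linarith [hp.1]
  have hcenter : ∀ t ≤ t₀, (x₀, t) ∈ parabolicRegion x₀ t₀ (kernelRadius b C) :=
    fun t ht => ⟨ht, by rw [sub_self, abs_zero]; exact mul_nonneg hb.le (sqrt_nonneg _)⟩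
  have hbelow : ∀ t < t₀, F x₀ t ≤ 1 / √(-t) := fun t ht => heatBarrier_self x₀ b t ▸
    le_of_subsolution_of_supersolution (continuous_kernelRadius b C) hFcont
      ((continuousOn_heatBarrier hb.ne').mono hneg) (fun p _ => heatBarrier_nonneg x₀ b p.1 p.2)
      (fun p hp hlat => heatBarrier_eq_of_abs_eq_kernelRadius hb hC (hp.1.trans ht₀_le) hlat ▸
        (hFbd p hp).2)
      (fun p hp => (ha p (interior_subset hp)).1.le)
      (fun p hp => ⟨(hFreg p hp).1, (hFreg p hp).2.differentiableAt one_ne_zero⟩)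
      (fun p hp => ⟨(contDiff_heatBarrier_x x₀ b p.2).contDiffAt,
        (hasDerivAt_heatBarrier_t hb.ne' p.1 (hneg p (interior_subset hp))).differentiableAt⟩)
      hsub
      (fun p hp => heatBarrier_supersolution hb.ne' (ha p (interior_subset hp)).2
        (hneg p (interior_subset hp)))
      (fun ε hε => (hsmall ε hε).imp fun _ h => h.2)
      (x₀, t) (hcenter t ht.le) ht
  intro t ht
  rcases ht.lt_or_eq with ht | rfl
  · exact hbelow t ht
  have hF : ContinuousWithinAt (fun s => F x₀ s) (Iio t) t :=
    (hFcont _ (hcenter t le_rfl)).comp (continuous_const.prodMk continuous_id).continuousWithinAt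
      fun s hs => hcenter s (le_of_lt hs)
  have hbarrier : ContinuousWithinAt (fun s => 1 / √(-s)) (Iio t) t :=
    (continuousAt_const.div (continuous_sqrt.comp continuous_neg).continuousAt
      (sqrt_pos.2 (by linarith)).ne').continuousWithinAt
  exact hF.closure_le (by simp) hbarrier hbelow
end

section
/- Let a, b, d: (-∞, 0) → ℝ be differentiable with a(t) > 0 and b(t) > 0 for all t < 0, and define w(x,t) := a(t)·e^{2x} + b(t)·e^{-2x} + d(t). If w satisfies the cylindrical pressure equation ∂_t w = w·∂_xx w - (∂_x w)² at every point of ℝ × (-∞, 0), then a' = 4ad, b' = 4bd, and d' = 16ab on (-∞, 0), and there exists a constant λ > 0 such that b(t) = λ²·a(t) for all t < 0. -/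
open Real Set

/-!
Substituting `w = a e^{2x} + b e^{-2x} + d` turns the pressure equation into an identity between
two functions of the same shape, `a' e^{2x} + b' e^{-2x} + d'` and
`4ad e^{2x} + 4bd e^{-2x} + 16ab` (the cross terms combine through `e^{2x} e^{-2x} = 1`), and such
functions determine their coefficients. Then `a` and `b` have the same logarithmic derivative `4d`,
so `b / a` is a positive constant.
-/

noncomputable def pressureProfile (A B D x : ℝ) : ℝ :=
  A * exp (2 * x) + B * exp (-(2 * x)) + D

namespace pressureProfile

theorem hasDerivAt (A B D x : ℝ) :
    HasDerivAt (pressureProfile A B D) (pressureProfile (2 * A) (-(2 * B)) 0 x) x := by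
  have hp : HasDerivAt (fun s => exp (2 * s)) (exp (2 * x) * (2 * 1)) x :=
    ((hasDerivAt_id x).const_mul 2).exp
  have hq : HasDerivAt (fun s => exp (-(2 * s))) (exp (-(2 * x)) * -(2 * 1)) x :=
    ((hasDerivAt_id x).const_mul 2).neg.exp
  refine (((hp.const_mul A).add (hq.const_mul B)).add_const D).congr_deriv ?_
  simp only [pressureProfile]
  ring

theorem deriv_eq (A B D : ℝ) :
    deriv (pressureProfile A B D) = pressureProfile (2 * A) (-(2 * B)) 0 :=
  funext fun x => (hasDerivAt A B D x).deriv

theorem deriv_deriv_eq (A B D : ℝ) :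
    deriv (deriv (pressureProfile A B D)) = pressureProfile (4 * A) (4 * B) 0 := by
  rw [deriv_eq, deriv_eq]
  congr 1 <;> ring

theorem hasDerivAt_coeff {a b d : ℝ → ℝ} {t : ℝ} (ha : DifferentiableAt ℝ a t)
    (hb : DifferentiableAt ℝ b t) (hd : DifferentiableAt ℝ d t) (x : ℝ) :
    HasDerivAt (fun s => pressureProfile (a s) (b s) (d s) x)
      (pressureProfile (deriv a t) (deriv b t) (deriv d t) x) t :=
  ((ha.hasDerivAt.mul_const _).add (hb.hasDerivAt.mul_const _)).add hd.hasDerivAt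

theorem mul_deriv_deriv_sub_deriv_sq (A B D x : ℝ) :
    pressureProfile A B D x * pressureProfile (4 * A) (4 * B) 0 x
        - pressureProfile (2 * A) (-(2 * B)) 0 x ^ 2 =
      pressureProfile (4 * A * D) (4 * B * D) (16 * A * B) x := by
  have hpq : exp (2 * x) * exp (-(2 * x)) = 1 := by rw [← exp_add, add_neg_cancel, exp_zero]
  simp only [pressureProfile]
  linear_combination 16 * A * B * hpq

theorem coeff_eq_of_eq {A B D A' B' D' : ℝ}
    (h : pressureProfile A B D = pressureProfile A' B' D') : A = A' ∧ B = B' ∧ D = D' := by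
  have hexp : exp (2 * (log 2 / 2)) = 2 := by
    rw [mul_div_cancel₀ _ two_ne_zero, exp_log two_pos]
  have h₀ := congrFun h 0
  have hpos := congrFun h (log 2 / 2)
  have hneg := congrFun h (-(log 2 / 2))
  simp only [pressureProfile, mul_neg, neg_neg, exp_neg, hexp, mul_zero, neg_zero, exp_zero]
    at h₀ hpos hneg
  refine ⟨?_, ?_, ?_⟩ <;> linarith

end pressureProfile

/-- If `w(x,t) = a(t)e^{2x} + b(t)e^{-2x} + d(t)` with `a, b > 0` solves the
cylindrical pressure equation `w_t = w·w_xx - w_x²` on `ℝ × (-∞,0)`, then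
`a' = 4ad`, `b' = 4bd`, `d' = 16ab`, and `b = λ²·a` for some constant `λ > 0`. -/
theorem ode_system_from_pressure_equation
    (a b d : ℝ → ℝ)
    (hdiff : ∀ t < (0 : ℝ), DifferentiableAt ℝ a t ∧ DifferentiableAt ℝ b t ∧
      DifferentiableAt ℝ d t)
    (hapos : ∀ t < (0 : ℝ), 0 < a t) (hbpos : ∀ t < (0 : ℝ), 0 < b t)
    (w : ℝ → ℝ → ℝ)
    (hw : ∀ x t, w x t = a t * Real.exp (2 * x) + b t * Real.exp (-(2 * x)) + d t)
    (hpde : ∀ x : ℝ, ∀ t < (0 : ℝ),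
      deriv (fun s => w x s) t =
        w x t * deriv (deriv (fun s => w s t)) x - (deriv (fun s => w s t) x) ^ 2) :
    (∀ t < (0 : ℝ),
      deriv a t = 4 * a t * d t ∧
      deriv b t = 4 * b t * d t ∧
      deriv d t = 16 * a t * b t) ∧
    ∃ l > (0 : ℝ), ∀ t < (0 : ℝ), b t = l ^ 2 * a t := by
  obtain rfl : w = fun x t => pressureProfile (a t) (b t) (d t) x := funext₂ hw
  have hode : ∀ t < (0 : ℝ), deriv a t = 4 * a t * d t ∧ deriv b t = 4 * b t * d t ∧
      deriv d t = 16 * a t * b t := fun t ht =>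
    let ⟨ha, hb, hd⟩ := hdiff t ht
    pressureProfile.coeff_eq_of_eq <| funext fun x => by
      rw [← (pressureProfile.hasDerivAt_coeff ha hb hd x).deriv, hpde x t ht,
        pressureProfile.deriv_deriv_eq, pressureProfile.deriv_eq,
        pressureProfile.mul_deriv_deriv_sub_deriv_sq]
  refine ⟨hode, ?_⟩
  have hlogDeriv : EqOn (logDeriv b) (logDeriv a) (Iio 0) := fun t (ht : t < 0) => by
    rw [logDeriv_apply, logDeriv_apply, (hode t ht).1, (hode t ht).2.1,
      mul_right_comm 4 (b t), mul_right_comm 4 (a t), mul_div_cancel_right₀ _ (hbpos t ht).ne', mul_div_cancel_right₀ _ (hapos t ht).ne']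
  obtain ⟨z, -, hz⟩ := (logDeriv_eqOn_iff (fun t ht => (hdiff t ht).2.1.differentiableWithinAt)
    (fun t ht => (hdiff t ht).1.differentiableWithinAt) isOpen_Iio isPreconnected_Iio
    (fun t ht => (hapos t ht).ne') (fun t ht => (hbpos t ht).ne')).1 hlogDeriv
  have hzpos : 0 < z := by
    have h := hz (show (-1 : ℝ) < 0 by norm_num)
    simp only [Pi.smul_apply, smul_eq_mul] at h
    exact pos_of_mul_pos_left (h ▸ hbpos (-1) (by norm_num)) (hapos (-1) (by norm_num)).le
  refine ⟨√z, sqrt_pos.2 hzpos, fun t ht => ?_⟩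
  rw [sq_sqrt hzpos.le]
  exact hz ht
end

section
/- Let a, d: (-∞, 0) → ℝ be differentiable with a(t) > 0 for all t < 0, satisfying a' = 4ad and d' = 4a² on (-∞, 0), and suppose lim_{t → 0⁻} a(t) = +∞. Then either there exists μ > 0 such that a(t) = -μ·csch(4μt) and d(t) = -μ·coth(4μt) for all t < 0, or a(t) = d(t) = 1/(-4t) for all t < 0. -/
/-!
The quantity `d² - a²` is conserved (its derivative is `2d·4a² - 2a·4ad = 0`); call it `c`. Then
`d' = 4(d² - c)` is a scalar Riccati equation. If `c = -ν² < 0`, then `arctan (d/ν) - 4νt` is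
constant, which is impossible as `t → -∞` since `arctan > -π/2`. If `c = 0`, then `d = ±a` by
continuity, so `(1/a)' = ∓4`, and `a → ∞` at `0⁻` forces `1/a = ∓4t`; the lower sign contradicts
`a > 0`. If `c = μ² > 0`, the ratio `r = (d - μ)/(d + μ)` satisfies `r' = 8μr`, and `|d| → ∞`
gives `r → 1` at `0⁻`, so `r = exp (8μt)`; solving for `d` gives `-μ coth (4μt)`, and then
`a = √(d² - μ²) = -μ csch (4μt)`.
-/

open Real Filter Topology

theorem exists_eq_const_of_hasDerivAt_zero {f : ℝ → ℝ} {b : ℝ} (hf : ∀ t < b, HasDerivAt f 0 t) :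
    ∃ K, ∀ t < b, f t = K :=
  isOpen_Iio.exists_is_const_of_deriv_eq_zero isPreconnected_Iio
    (fun t ht => (hf t ht).differentiableAt.differentiableWithinAt) fun t ht => (hf t ht).deriv

theorem eq_of_hasDerivAt_zero_of_tendsto {f : ℝ → ℝ} {b L : ℝ} (hf : ∀ t < b, HasDerivAt f 0 t)
    (hlim : Tendsto f (𝓝[<] b) (𝓝 L)) : ∀ t < b, f t = L := by
  obtain ⟨K, hK⟩ := exists_eq_const_of_hasDerivAt_zero hf
  have hK' : Tendsto f (𝓝[<] b) (𝓝 K) :=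
    tendsto_const_nhds.congr' (eventually_nhdsWithin_of_forall fun t ht => (hK t ht).symm)
  intro t ht
  rw [hK t ht, tendsto_nhds_unique hK' hlim]

theorem inv_eq_of_hasDerivAt_mul_sq {a : ℝ → ℝ} {k : ℝ}
    (ha : ∀ t < (0 : ℝ), HasDerivAt a (k * a t ^ 2) t) (ha0 : ∀ t < (0 : ℝ), a t ≠ 0)
    (hblow : Tendsto a (𝓝[<] 0) atTop) : ∀ t < (0 : ℝ), (a t)⁻¹ = -(k * t) := by
  have hderiv : ∀ t < (0 : ℝ), HasDerivAt (fun t => (a t)⁻¹ + k * t) 0 t := fun t ht =>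
    (((ha t ht).fun_inv (ha0 t ht)).add ((hasDerivAt_id t).const_mul k)).congr_deriv
      (by field_simp [ha0 t ht]; ring)
  have hlim : Tendsto (fun t => (a t)⁻¹ + k * t) (𝓝[<] 0) (𝓝 0) := by
    have hlin : Tendsto (fun t : ℝ => k * t) (𝓝[<] 0) (𝓝 0) :=
      ((continuous_const_mul k).tendsto' 0 0 (mul_zero k)).mono_left nhdsWithin_le_nhds
    simpa using hblow.inv_tendsto_atTop.add hlin
  intro t ht
  linarith [eq_of_hasDerivAt_zero_of_tendsto hderiv hlim t ht]

theorem false_of_hasDerivAt_sq_add_sq {d : ℝ → ℝ} {ν : ℝ} (hν : 0 < ν)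
    (hd : ∀ t < (0 : ℝ), HasDerivAt d (4 * (d t ^ 2 + ν ^ 2)) t) : False := by
  obtain ⟨K, hK⟩ := exists_eq_const_of_hasDerivAt_zero
      (f := fun t => arctan (d t / ν) - 4 * ν * t) (b := 0) fun t ht => by
    refine (((hd t ht).div_const ν).arctan.sub ((hasDerivAt_id t).const_mul (4 * ν))).congr_deriv ?_
    field_simp
    ring
  have hlin : Tendsto (fun t => K + 4 * ν * t) atBot atBot :=
    tendsto_atBot_add_const_left _ K (tendsto_id.const_mul_atBot (by positivity))
  obtain ⟨t, hlt, ht⟩ := ((hlin.eventually_lt_atBot (-(π / 2))).and (eventually_lt_atBot 0)).exists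
  linarith [neg_pi_div_two_lt_arctan (d t / ν), hK t ht]

theorem div_eq_exp_of_hasDerivAt_sq_sub_sq {d : ℝ → ℝ} {μ : ℝ} (hμ : 0 < μ)
    (hd : ∀ t < (0 : ℝ), HasDerivAt d (4 * (d t ^ 2 - μ ^ 2)) t)
    (hdμ : ∀ t < (0 : ℝ), μ < |d t|) (hblow : Tendsto (fun t => |d t|) (𝓝[<] 0) atTop) :
    ∀ t < (0 : ℝ), (d t - μ) / (d t + μ) = exp (8 * μ * t) := by
  have hne : ∀ t < (0 : ℝ), d t + μ ≠ 0 := fun t ht h => by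
    have := hdμ t ht
    rw [eq_neg_of_add_eq_zero_left h, abs_neg, abs_of_pos hμ] at this
    exact lt_irrefl μ this
  have hderiv : ∀ t < (0 : ℝ),
      HasDerivAt (fun t => (d t - μ) / (d t + μ) * exp (-(8 * μ) * t)) 0 t := fun t ht => by
    have hexp := ((hasDerivAt_id' t).const_mul (-(8 * μ))).exp
    refine ((((hd t ht).sub_const μ).fun_div ((hd t ht).add_const μ) (hne t ht)).fun_mul
      hexp).congr_deriv ?_
    field_simp [hne t ht]
    ring
  have hinv : Tendsto (fun t => (d t + μ)⁻¹) (𝓝[<] 0) (𝓝 0) := by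
    have habs : Tendsto (fun t => |d t + μ|) (𝓝[<] 0) atTop := by
      refine tendsto_atTop_mono (fun t => ?_) (tendsto_atTop_add_const_right _ (-μ) hblow)
      simpa [abs_of_pos hμ] using abs_sub_abs_le_abs_sub (d t) (-μ)
    simpa [tendsto_zero_iff_abs_tendsto_zero, Function.comp_def, abs_inv] using
      habs.inv_tendsto_atTop
  have hlim : Tendsto (fun t => (d t - μ) / (d t + μ) * exp (-(8 * μ) * t)) (𝓝[<] 0) (𝓝 1) := by
    have hexp : Tendsto (fun t : ℝ => exp (-(8 * μ) * t)) (𝓝[<] 0) (𝓝 1) :=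
      ((by fun_prop : Continuous fun t : ℝ => exp (-(8 * μ) * t)).tendsto' 0 1 (by simp)).mono_left
        nhdsWithin_le_nhds
    have hratio : Tendsto (fun t => 1 - 2 * μ * (d t + μ)⁻¹) (𝓝[<] 0) (𝓝 1) := by
      simpa using (hinv.const_mul (2 * μ)).const_sub 1
    refine (hratio.congr' ?_).mul hexp |>.trans (by rw [one_mul])
    filter_upwards [self_mem_nhdsWithin] with t ht
    field_simp [hne t ht]
    ring
  intro t ht
  have := eq_of_hasDerivAt_zero_of_tendsto hderiv hlim t ht
  rwa [neg_mul, exp_neg, mul_inv_eq_one₀ (exp_pos _).ne'] at this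

theorem eq_neg_mul_coth_of_div_eq_exp {D μ x : ℝ} (hx : x ≠ 0)
    (h : (D - μ) / (D + μ) = exp (2 * x)) : D = -μ * (cosh x / sinh x) := by
  have hD : D + μ ≠ 0 := fun h0 => (exp_pos _).ne' (by rw [← h, h0, div_zero])
  have hs : exp x - exp (-x) ≠ 0 := fun h => hx (by linarith [exp_injective (sub_eq_zero.1 h)])
  rw [cosh_eq, sinh_eq]
  rw [two_mul, exp_add, div_eq_iff hD] at h
  have hE : exp x * exp (-x) = 1 := by rw [← exp_add, add_neg_cancel, exp_zero]
  field_simp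
  linear_combination -exp (-x) * h - exp x * (D + μ) * hE

theorem eq_neg_mul_inv_sinh_of_sq_eq {A μ x : ℝ} (hA : 0 < A) (hμ : 0 < μ) (hx : x < 0)
    (h : A ^ 2 = (-μ * (cosh x / sinh x)) ^ 2 - μ ^ 2) : A = -μ * (sinh x)⁻¹ := by
  have hs : sinh x < 0 := sinh_neg_iff.2 hx
  have hpos : 0 < -μ * (sinh x)⁻¹ := mul_pos_of_neg_of_neg (neg_neg_of_pos hμ) (inv_lt_zero.2 hs)
  rw [← pow_left_inj₀ hA.le hpos.le two_ne_zero, h]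
  field_simp [hs.ne]
  linear_combination cosh_sq_sub_sinh_sq x

section PressureODE

variable {a d : ℝ → ℝ}

theorem exists_sq_sub_sq_eq_const (ha : ∀ t < (0 : ℝ), HasDerivAt a (4 * a t * d t) t)
    (hd : ∀ t < (0 : ℝ), HasDerivAt d (4 * a t ^ 2) t) :
    ∃ c, ∀ t < (0 : ℝ), d t ^ 2 - a t ^ 2 = c :=
  exists_eq_const_of_hasDerivAt_zero fun t ht =>
    (((hd t ht).fun_pow 2).fun_sub ((ha t ht).fun_pow 2)).congr_deriv (by ring)

theorem false_of_sq_sub_sq_eq_neg (hd : ∀ t < (0 : ℝ), HasDerivAt d (4 * a t ^ 2) t) {c : ℝ}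
    (hc : ∀ t < (0 : ℝ), d t ^ 2 - a t ^ 2 = c) (hneg : c < 0) : False := by
  refine false_of_hasDerivAt_sq_add_sq (d := d) (sqrt_pos.2 (neg_pos.2 hneg)) fun t ht => ?_
  rw [sq_sqrt (neg_nonneg.2 hneg.le)]
  convert hd t ht using 2
  linarith [hc t ht]

theorem contracting_sphere_of_sq_sub_sq_eq_zero (ha : ∀ t < (0 : ℝ), HasDerivAt a (4 * a t * d t) t)
    (hd : ∀ t < (0 : ℝ), HasDerivAt d (4 * a t ^ 2) t) (hapos : ∀ t < (0 : ℝ), 0 < a t)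
    (hc : ∀ t < (0 : ℝ), d t ^ 2 - a t ^ 2 = 0) (hblow : Tendsto a (𝓝[<] 0) atTop) :
    ∀ t < (0 : ℝ), a t = 1 / (-(4 * t)) ∧ d t = 1 / (-(4 * t)) := by
  have hsq : ∀ t < (0 : ℝ), d t ^ 2 = a t ^ 2 := fun t ht => sub_eq_zero.1 (hc t ht)
  have ha0 : ∀ t < (0 : ℝ), a t ≠ 0 := fun t ht => (hapos t ht).ne'
  rcases isPreconnected_Iio.eq_or_eq_neg_of_sq_eq
      (fun t ht => (hd t ht).continuousAt.continuousWithinAt)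
      (fun t ht => (ha t ht).continuousAt.continuousWithinAt) hsq (ha0 _) with hda | hda
  · have hinv := inv_eq_of_hasDerivAt_mul_sq (k := 4)
      (fun t ht => by convert ha t ht using 1; rw [hda ht]; ring) ha0 hblow
    intro t ht
    have hat : a t = 1 / (-(4 * t)) := by rw [← hinv t ht, one_div, inv_inv]
    exact ⟨hat, hda ht ▸ hat⟩
  · have hinv := inv_eq_of_hasDerivAt_mul_sq (k := -4)
      (fun t ht => by convert ha t ht using 1; rw [hda ht, Pi.neg_apply]; ring) ha0 hblow
    have := inv_pos.2 (hapos (-1) (by norm_num))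
    linarith [hinv (-1) (by norm_num)]

theorem exists_rosenau_of_sq_sub_sq_eq_pos (hd : ∀ t < (0 : ℝ), HasDerivAt d (4 * a t ^ 2) t)
    (hapos : ∀ t < (0 : ℝ), 0 < a t) {c : ℝ} (hc : ∀ t < (0 : ℝ), d t ^ 2 - a t ^ 2 = c)
    (hpos : 0 < c) (hblow : Tendsto a (𝓝[<] 0) atTop) :
    ∃ μ > (0 : ℝ), ∀ t < (0 : ℝ),
      a t = -μ * (sinh (4 * μ * t))⁻¹ ∧ d t = -μ * (cosh (4 * μ * t) / sinh (4 * μ * t)) := by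
  set μ := √c
  have hμ : 0 < μ := sqrt_pos.2 hpos
  have hμsq : μ ^ 2 = c := sq_sqrt hpos.le
  have hd' : ∀ t < (0 : ℝ), HasDerivAt d (4 * (d t ^ 2 - μ ^ 2)) t := fun t ht => by
    convert hd t ht using 2
    linarith [hc t ht]
  have hdμ : ∀ t < (0 : ℝ), μ < |d t| := fun t ht => by
    rw [← abs_of_pos hμ, ← sq_lt_sq]
    nlinarith [hc t ht, hapos t ht]
  have hdblow : Tendsto (fun t => |d t|) (𝓝[<] 0) atTop := by
    refine tendsto_atTop_mono' _ ?_ hblow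
    filter_upwards [self_mem_nhdsWithin] with t ht
    rw [← abs_of_pos (hapos t ht), ← sq_le_sq]
    linarith [hc t ht]
  refine ⟨μ, hμ, fun t ht => ?_⟩
  have hx : 4 * μ * t < 0 := mul_neg_of_pos_of_neg (by positivity) ht
  have hratio := div_eq_exp_of_hasDerivAt_sq_sub_sq hμ hd' hdμ hdblow t ht
  have hdt : d t = -μ * (cosh (4 * μ * t) / sinh (4 * μ * t)) :=
    eq_neg_mul_coth_of_div_eq_exp hx.ne (by rw [hratio]; ring_nf)
  refine ⟨eq_neg_mul_inv_sinh_of_sq_eq (hapos t ht) hμ hx ?_, hdt⟩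
  rw [← hdt]
  linarith [hc t ht]

end PressureODE

/-- The ODE system `a' = 4ad`, `d' = 4a²` with `a > 0` on `(-∞,0)` and `a(t) → ∞`
as `t → 0⁻` has exactly the solutions `a(t) = -μ·csch(4μt)`, `d(t) = -μ·coth(4μt)`
for some `μ > 0` (Rosenau), or `a(t) = d(t) = 1/(-4t)` (contracting spheres). -/
theorem ode_system_classification
    (a d : ℝ → ℝ)
    (hdiff : ∀ t < (0 : ℝ), DifferentiableAt ℝ a t ∧ DifferentiableAt ℝ d t)
    (hapos : ∀ t < (0 : ℝ), 0 < a t)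
    (hode1 : ∀ t < (0 : ℝ), deriv a t = 4 * a t * d t)
    (hode2 : ∀ t < (0 : ℝ), deriv d t = 4 * (a t) ^ 2)
    (hblow : Tendsto a (nhdsWithin 0 (Set.Iio (0 : ℝ))) atTop) :
    (∃ μ > (0 : ℝ), ∀ t < (0 : ℝ),
      a t = -μ * (Real.sinh (4 * μ * t))⁻¹ ∧
      d t = -μ * (Real.cosh (4 * μ * t) / Real.sinh (4 * μ * t))) ∨
    (∀ t < (0 : ℝ), a t = 1 / (-(4 * t)) ∧ d t = 1 / (-(4 * t))) := by
  have ha : ∀ t < (0 : ℝ), HasDerivAt a (4 * a t * d t) t := fun t ht =>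
    hode1 t ht ▸ (hdiff t ht).1.hasDerivAt
  have hd : ∀ t < (0 : ℝ), HasDerivAt d (4 * a t ^ 2) t := fun t ht =>
    hode2 t ht ▸ (hdiff t ht).2.hasDerivAt
  obtain ⟨c, hc⟩ := exists_sq_sub_sq_eq_const ha hd
  rcases lt_trichotomy c 0 with hneg | rfl | hpos
  · exact (false_of_sq_sub_sq_eq_neg hd hc hneg).elim
  · exact Or.inr (contracting_sphere_of_sq_sub_sq_eq_zero ha hd hapos hc hblow)
  · exact Or.inl (exists_rosenau_of_sq_sub_sq_eq_pos hd hapos hc hpos hblow)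
end
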